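/- arXiv:1312.1480 — 2 statements merged into one kernel-verified Lean document; each statement's English description precedes it below -/
import Mathlib

section
/- Let S be the group ℤ₂ = {0,1}, and let G be a simple S-symmetric graph where the action θ : S → Aut(G) is free on both V(G) and E(G). Then G is (2,2)-tight if and only if its quotient S-gain graph G_0 is (2,2,1)-gain-tight. -/
open Matrix Real

noncomputable section

namespace SymSurf


/-- Vectors in `ℝ³`. -/
abbrev V3 : Type := Fin 3 → ℝ

/-- `3 × 3` real matrices. -/
abbrev Mat3 : Type := Matrix (Fin 3) (Fin 3) ℝ

/-- The Euclidean dot product on `ℝ³`. -/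
def dot3 (u v : V3) : ℝ := ∑ i, u i * v i

/-- The orthogonal group `O(3)` (unitary group of real `3 × 3` matrices). -/
abbrev OG := Matrix.unitaryGroup (Fin 3) ℝ

/-- The matrix of an element of a subgroup of `O(3)`. -/
def gmat {S : Subgroup OG} (g : S) : Mat3 := ((g : OG) : Mat3)

/-- A surface in `ℝ³`, given by its point set together with a choice of a normal
vector at every point. -/
structure Surf where
  carrier : Set V3
  normal : V3 → V3

/-- The unit sphere `x² + y² + z² = 1`, with its radial normal field. -/
def sphereSurf : Surf :=
  ⟨{p | p 0 ^ 2 + p 1 ^ 2 + p 2 ^ 2 = 1}, fun p => p⟩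

/-- The unit cylinder `x² + y² = 1` about the `z`-axis. -/
def cylSurf : Surf :=
  ⟨{p | p 0 ^ 2 + p 1 ^ 2 = 1}, fun p => ![p 0, p 1, 0]⟩

/-- The unit cone `x² + y² = z²` about the `z`-axis. -/
def coneSurf : Surf :=
  ⟨{p | p 0 ^ 2 + p 1 ^ 2 = p 2 ^ 2}, fun p => ![p 0, p 1, -p 2]⟩

/-- An action of a group on a simple graph by automorphisms which is free on the vertices. -/
def FreeGraphAction {Γ W : Type*} [Group Γ] (G : SimpleGraph W) (θ : Γ →* Equiv.Perm W) : Prop :=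
  (∀ (x : Γ) (u v : W), G.Adj u v ↔ G.Adj (θ x u) (θ x v)) ∧
  (∀ x : Γ, x ≠ 1 → ∀ v : W, θ x v ≠ v)

/-- `p` realises the graph `G` as an `S`-symmetric framework (with respect to the action `θ`)
supported on the surface `M`, with no joint fixed by a nontrivial element of `S`. -/
def IsSymFramework (M : Surf) {S : Subgroup OG} {W : Type*}
    (θ : S →* Equiv.Perm W) (G : SimpleGraph W) (p : W → V3) : Prop :=
  (∀ v, p v ∈ M.carrier) ∧
  (∀ u v, G.Adj u v → p u ≠ p v) ∧
  (∀ (x : S) (v : W), (gmat x).mulVec (p v) = p (θ x v)) ∧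
  (∀ x : S, x ≠ 1 → ∀ v : W, (gmat x).mulVec (p v) ≠ p v)

/-- An `S`-symmetric infinitesimal motion of the framework `(G, p)` on the surface `M`:
an assignment of tangential velocity vectors satisfying the first-order length constraints,
invariant under the symmetry group. -/
def IsSymMotion (M : Surf) {S : Subgroup OG} {W : Type*}
    (θ : S →* Equiv.Perm W) (G : SimpleGraph W) (p u : W → V3) : Prop :=
  (∀ v, dot3 (u v) (M.normal (p v)) = 0) ∧
  (∀ i j, G.Adj i j → dot3 (u i - u j) (p i - p j) = 0) ∧
  (∀ (x : S) (v : W), (gmat x).mulVec (u v) = u (θ x v))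

/-- `(A, b)` is an `S`-symmetric infinitesimal isometry of `ℝ³` (`A` skew-symmetric) which is
tangential to the surface `M`. -/
def IsSymTangIso (M : Surf) (S : Subgroup OG) (A : Mat3) (b : V3) : Prop :=
  Aᵀ = -A ∧
  (∀ q ∈ M.carrier, dot3 (A.mulVec q + b) (M.normal q) = 0) ∧
  (∀ (x : S) (q : V3), (gmat x).mulVec (A.mulVec q + b) = A.mulVec ((gmat x).mulVec q) + b)

/-- A motion is trivial when it is the restriction to the joints of an `S`-symmetric
infinitesimal isometry of `ℝ³` tangential to `M`. -/
def IsTrivialMotion (M : Surf) (S : Subgroup OG) {W : Type*} (p u : W → V3) : Prop :=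
  ∃ A b, IsSymTangIso M S A b ∧ ∀ v, u v = A.mulVec (p v) + b

/-- The orbit of an edge under the symmetry group action. -/
def edgeOrbit {S : Subgroup OG} {W : Type*} (θ : S →* Equiv.Perm W) (e : Sym2 W) :
    Set (Sym2 W) :=
  {e' | ∃ x : S, e' = Sym2.map (θ x) e}

/-- The framework `(G, p)` on `M` is `S`-isostatic : every `S`-symmetric infinitesimal motion
is trivial, and deleting any edge orbit destroys this property. -/
def SIsostatic (M : Surf) {S : Subgroup OG} {W : Type*}
    (θ : S →* Equiv.Perm W) (G : SimpleGraph W) (p : W → V3) : Prop :=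
  (∀ u, IsSymMotion M θ G p u → IsTrivialMotion M S p u) ∧
  (∀ e ∈ G.edgeSet, ∃ u, IsSymMotion M θ (G.deleteEdges (edgeOrbit θ e)) p u ∧
    ¬ IsTrivialMotion M S p u)

lemma dot3_add_left (u v w : V3) : dot3 (u + v) w = dot3 u w + dot3 v w := by
  simp [dot3, add_mul, Finset.sum_add_distrib]

lemma dot3_smul_left (c : ℝ) (u w : V3) : dot3 (c • u) w = c * dot3 u w := by
  simp [dot3, Finset.mul_sum, mul_assoc]

/-- The space of `S`-symmetric infinitesimal isometries of `ℝ³` tangential to `M`,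
as a submodule of pairs (skew-symmetric matrix, translation vector). -/
def symTangIsoSub (M : Surf) (S : Subgroup OG) : Submodule ℝ (Mat3 × V3) where
  carrier := {Ab | IsSymTangIso M S Ab.1 Ab.2}
  zero_mem' := by
    refine ⟨by simp, ?_, ?_⟩
    · intro q _
      simp [dot3, Matrix.zero_mulVec]
    · intro x q
      simp [Matrix.zero_mulVec, Matrix.mulVec_zero]
  add_mem' := by
    rintro ⟨A, b⟩ ⟨C, d⟩ ⟨hA1, hA2, hA3⟩ ⟨hC1, hC2, hC3⟩
    have key : ∀ q : V3, (A + C).mulVec q + (b + d) = (A.mulVec q + b) + (C.mulVec q + d) := by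
      intro q; rw [Matrix.add_mulVec]; abel
    refine ⟨?_, ?_, ?_⟩
    · show (A + C)ᵀ = -(A + C)
      rw [Matrix.transpose_add, hA1, hC1]; abel
    · intro q hq
      show dot3 ((A + C).mulVec q + (b + d)) (M.normal q) = 0
      rw [key q, dot3_add_left, hA2 q hq, hC2 q hq, add_zero]
    · intro x q
      show (gmat x).mulVec ((A + C).mulVec q + (b + d)) =
        (A + C).mulVec ((gmat x).mulVec q) + (b + d)
      rw [key q, Matrix.mulVec_add, hA3 x q, hC3 x q, key ((gmat x).mulVec q)]
  smul_mem' := by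
    rintro c ⟨A, b⟩ ⟨h1, h2, h3⟩
    have key : ∀ q : V3, (c • A).mulVec q + c • b = c • (A.mulVec q + b) := by
      intro q; rw [Matrix.smul_mulVec, smul_add]
    refine ⟨?_, ?_, ?_⟩
    · show (c • A)ᵀ = -(c • A)
      rw [Matrix.transpose_smul, h1, smul_neg]
    · intro q hq
      show dot3 ((c • A).mulVec q + c • b) (M.normal q) = 0
      rw [key q, dot3_smul_left, h2 q hq, mul_zero]
    · intro x q
      show (gmat x).mulVec ((c • A).mulVec q + c • b) =
        (c • A).mulVec ((gmat x).mulVec q) + c • b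
      rw [key q, Matrix.mulVec_smul, h3 x q, key ((gmat x).mulVec q)]

/-- The dimension of the space of `S`-symmetric infinitesimal isometries of `ℝ³`
tangential to `M` ("the symmetric type `k_S` of `M`"). -/
def kSym (M : Surf) (S : Subgroup OG) : ℕ := Module.finrank ℝ (symTangIsoSub M S)

/-- The type `k` of a surface: the dimension of the space of infinitesimal isometries of `ℝ³`
tangential to `M`. -/
def surfType (M : Surf) : ℕ := kSym M ⊥

/-- An irreducible algebraic surface in `ℝ³`: the zero set of an irreducible real polynomial
in three variables. -/
structure AlgSurface where
  poly : MvPolynomial (Fin 3) ℝ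
  irred : Irreducible poly

/-- The surface data (point set and gradient normal field) of an irreducible algebraic
surface. -/
def AlgSurface.toSurf (M : AlgSurface) : Surf :=
  ⟨{p | MvPolynomial.eval p M.poly = 0},
   fun p i => MvPolynomial.eval p (MvPolynomial.pderiv i M.poly)⟩

/-- A gain graph: a directed multigraph with edge set `E`, vertex set `V`, and a gain in the
group `Γ` on each edge. -/
structure GainGraph (Γ V E : Type*) [Group Γ] where
  tail : E → V
  head : E → V
  gain : E → Γ

variable {Γ V E : Type*} [Group Γ]

/-- Walks in a gain graph: edges may be traversed forwards or backwards. -/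
inductive GWalk (H : GainGraph Γ V E) : V → V → Type _
  | nil (v : V) : GWalk H v v
  | fwd (e : E) {w : V} : GWalk H (H.head e) w → GWalk H (H.tail e) w
  | bwd (e : E) {w : V} : GWalk H (H.tail e) w → GWalk H (H.head e) w

namespace GWalk

variable {H : GainGraph Γ V E}

/-- The gain of a walk: the product of the gains of its edges, inverting the gain of any edge
traversed against its orientation. -/
def gainOf : ∀ {u v : V}, GWalk H u v → Γ
  | _, _, nil _ => 1
  | _, _, fwd e w => H.gain e * gainOf w
  | _, _, bwd e w => (H.gain e)⁻¹ * gainOf w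

/-- The list of edges used by a walk. -/
def edgesOf : ∀ {u v : V}, GWalk H u v → List E
  | _, _, nil _ => []
  | _, _, fwd e w => e :: edgesOf w
  | _, _, bwd e w => e :: edgesOf w

end GWalk

namespace GainGraph

variable (H : GainGraph Γ V E)

/-- An edge set `F` of a gain graph is balanced if every closed walk using only edges of `F`
has identity gain (equivalently, every cycle in `F` has identity gain). -/
def Balanced (F : Set E) : Prop :=
  ∀ (v : V) (w : GWalk H v v), (∀ e ∈ w.edgesOf, e ∈ F) → w.gainOf = 1

/-- `⟨F⟩_v` : the set of gains of closed walks based at `v` using only edges of `F`. -/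
def gainsAt (F : Set E) (v : V) : Set Γ :=
  {g | ∃ w : GWalk H v v, (∀ e ∈ w.edgesOf, e ∈ F) ∧ w.gainOf = g}

/-- The gain labelling of `H` restricted to `F` is switching-equivalent to the trivial
(identity) gain labelling. -/
def SwitchTrivial (F : Set E) : Prop :=
  ∃ φ : V → Γ, ∀ e ∈ F, H.gain e = (φ (H.tail e))⁻¹ * φ (H.head e)

/-- The set `V(F)` of vertices spanned by an edge set `F`. -/
def vSpan [DecidableEq V] (F : Finset E) : Finset V :=
  F.image H.tail ∪ F.image H.head

/-- `H` is `(k, ℓ, m)`-gain-tight: `|E(H)| = k|V(H)| - m`, every nonempty balanced edge set `F`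
satisfies `|F| ≤ k|V(F)| - ℓ`, and every nonempty edge set `F` satisfies `|F| ≤ k|V(F)| - m`. -/
def GainTight [Fintype V] [Fintype E] [DecidableEq V] (k l m : ℤ) : Prop :=
  (Fintype.card E : ℤ) = k * (Fintype.card V : ℤ) - m ∧
  (∀ F : Finset E, F.Nonempty → H.Balanced ↑F →
    (F.card : ℤ) ≤ k * ((H.vSpan F).card : ℤ) - l) ∧
  (∀ F : Finset E, F.Nonempty → (F.card : ℤ) ≤ k * ((H.vSpan F).card : ℤ) - m)

/-- `e` is an edge from `u` to `w` with gain `g`, up to reversal of orientation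
(which inverts the gain). -/
def EdgeIs (e : E) (u w : V) (g : Γ) : Prop :=
  (H.tail e = u ∧ H.head e = w ∧ H.gain e = g) ∨
  (H.tail e = w ∧ H.head e = u ∧ H.gain e = g⁻¹)

/-- The covering graph of a gain graph, as a simple graph on `Γ × V`. -/
def cover : SimpleGraph (Γ × V) :=
  SimpleGraph.fromRel (fun a b =>
    ∃ e : E, a.2 = H.tail e ∧ b.2 = H.head e ∧ b.1 = a.1 * H.gain e)

/-- The covering (multi-)graph of a gain graph is simple: no edge lifts to a loop, and
distinct lifted edges are distinct. -/
def CoverSimple : Prop :=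
  (∀ e : E, ¬ (H.tail e = H.head e ∧ H.gain e = 1)) ∧
  Function.Injective (fun q : Γ × E =>
    s(((q.1, H.tail q.2) : Γ × V), ((q.1 * H.gain q.2, H.head q.2) : Γ × V)))

end GainGraph

/-- `H` is (a presentation of) the quotient `Γ`-gain graph of the `Γ`-symmetric graph `G`:
its covering graph is simple and there is an isomorphism from the covering graph to `G`
which intertwines the natural action on the cover with the action `θ`. -/
def IsQuotientOf {W : Type*} (G : SimpleGraph W) {Γ : Type*} [Group Γ]
    (θ : Γ →* Equiv.Perm W) {V E : Type*} (H : GainGraph Γ V E) : Prop :=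
  H.CoverSimple ∧
  ∃ φ : H.cover ≃g G, ∀ (x y : Γ) (v : V), φ (x * y, v) = θ x (φ (y, v))

/-- Transcendence degree of the subfield `L` of `ℝ` over its subfield `K`:
the supremum of the cardinalities of the `K`-algebraically independent subsets of `L`. -/
def subfieldTrdeg (K L : Subfield ℝ) (h : K ≤ L) : Cardinal :=
  letI : Algebra K L := (Subfield.inclusion h).toAlgebra
  ⨆ s : {s : Set L // AlgebraicIndependent K ((↑) : s → L)}, Cardinal.mk s.1

/-- The set of all entries of the matrices of the symmetry group `S`. -/
def entriesOf (S : Subgroup OG) : Set ℝ :=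
  {r | ∃ (x : S) (i j : Fin 3), gmat x i j = r}

/-- The set of all coordinates of the joints of a configuration `p`. -/
def coordsOf {W : Type*} (p : W → V3) : Set ℝ :=
  {r | ∃ (v : W) (i : Fin 3), p v i = r}

/-- `ℚ_S`: the subfield of `ℝ` generated by the entries of the matrices in `S`. -/
def QS (S : Subgroup OG) : Subfield ℝ := Subfield.closure (entriesOf S)

/-- `ℚ_S(p)`: the subfield of `ℝ` generated by the entries of the matrices in `S` together
with the coordinates of `p`. -/
def QSp (S : Subgroup OG) {W : Type*} (p : W → V3) : Subfield ℝ :=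
  Subfield.closure (entriesOf S ∪ coordsOf p)

/-- `p` is `S`-generic (for a quotient gain graph with `n` vertices):
the transcendence degree of `ℚ_S(p)` over `ℚ_S` equals `2n`. -/
def SGeneric (S : Subgroup OG) {W : Type*} (p : W → V3) (n : ℕ) : Prop :=
  subfieldTrdeg (QS S) (QSp S p) (Subfield.closure_mono Set.subset_union_left) = (2 * n : ℕ)

/-- The cross-product matrix of an axis vector. -/
def crossMat (a : V3) : Mat3 :=
  !![0, -a 2, a 1; a 2, 0, -a 0; -a 1, a 0, 0]

/-- Rotation by angle `θ` about the axis `a` through the origin (Rodrigues formula). -/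
def rotMat (a : V3) (θ : ℝ) : Mat3 :=
  Real.cos θ • (1 : Mat3) + Real.sin θ • crossMat a +
    (1 - Real.cos θ) • Matrix.vecMulVec a a

/-- Reflection in the plane through the origin with unit normal `n`. -/
def reflMat (n : V3) : Mat3 := 1 - (2 : ℝ) • Matrix.vecMulVec n n

/-- The unit vector along the `z`-axis. -/
def ez : V3 := ![0, 0, 1]

/-- `S` is the cyclic group `C_m` generated by the rotation about the axis `a`
through the origin by `2π/m`. -/
def IsRotationGroup (S : Subgroup OG) (a : V3) (m : ℕ) : Prop :=
  1 ≤ m ∧ dot3 a a = 1 ∧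
  ∃ x : OG, (x : Mat3) = rotMat a (2 * Real.pi / m) ∧ S = Subgroup.zpowers x

/-- `S` is the group `C_s` generated by the reflection in the plane through the origin
with unit normal `n`. -/
def IsReflectionGroup (S : Subgroup OG) (n : V3) : Prop :=
  dot3 n n = 1 ∧ ∃ x : OG, (x : Mat3) = reflMat n ∧ S = Subgroup.zpowers x

/-- `S` is the group `C_i` generated by the inversion `x ↦ -x` in the origin. -/
def IsInversionGroup (S : Subgroup OG) : Prop :=
  ∃ x : OG, (x : Mat3) = (-1 : Mat3) ∧ S = Subgroup.zpowers x

/-- `S` is the group `C_mh`, generated by the `m`-fold rotation about the axis `a` and the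
reflection in the plane through the origin perpendicular to `a`. -/
def IsCmh (S : Subgroup OG) (a : V3) (m : ℕ) : Prop :=
  1 ≤ m ∧ dot3 a a = 1 ∧
  ∃ x y : OG, (x : Mat3) = rotMat a (2 * Real.pi / m) ∧ (y : Mat3) = reflMat a ∧
    S = Subgroup.closure {x, y}

/-- `S` is the group `S_2m`, generated by the `2m`-fold improper rotation about the axis
`a` (rotation by `π/m` followed by the reflection in the perpendicular plane). -/
def IsS2m (S : Subgroup OG) (a : V3) (m : ℕ) : Prop :=
  1 ≤ m ∧ dot3 a a = 1 ∧
  ∃ x : OG, (x : Mat3) = reflMat a * rotMat a (Real.pi / m) ∧ S = Subgroup.zpowers x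

/-- `S` is the dihedral group `C_mv`, generated by the `m`-fold rotation about the axis `a`
and a reflection in a plane containing this axis (i.e. with unit normal `n ⟂ a`). -/
def IsCmv (S : Subgroup OG) (a n : V3) (m : ℕ) : Prop :=
  1 ≤ m ∧ dot3 a a = 1 ∧ dot3 n n = 1 ∧ dot3 a n = 0 ∧
  ∃ x y : OG, (x : Mat3) = rotMat a (2 * Real.pi / m) ∧ (y : Mat3) = reflMat n ∧
    S = Subgroup.closure {x, y}

section Moves

variable {Γ : Type*} [Group Γ] {V E : Type*}

/-- Henneberg move H1a: add a new vertex together with two non-loop, non-parallel edges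
incident with it, with arbitrary gains. -/
def IsH1a (H : GainGraph Γ V E) (H' : GainGraph Γ (Option V) (E ⊕ Fin 2)) : Prop :=
  (∀ e : E, H'.tail (Sum.inl e) = some (H.tail e) ∧ H'.head (Sum.inl e) = some (H.head e) ∧
    H'.gain (Sum.inl e) = H.gain e) ∧
  (∀ i : Fin 2, H'.head (Sum.inr i) = none) ∧
  (∃ a b : V, a ≠ b ∧ H'.tail (Sum.inr 0) = some a ∧ H'.tail (Sum.inr 1) = some b)

/-- Henneberg move H1b: add a new vertex together with two parallel edges (directed to the
new vertex) with distinct gains. -/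
def IsH1b (H : GainGraph Γ V E) (H' : GainGraph Γ (Option V) (E ⊕ Fin 2)) : Prop :=
  (∀ e : E, H'.tail (Sum.inl e) = some (H.tail e) ∧ H'.head (Sum.inl e) = some (H.head e) ∧
    H'.gain (Sum.inl e) = H.gain e) ∧
  (∀ i : Fin 2, H'.head (Sum.inr i) = none) ∧
  (∃ a : V, H'.tail (Sum.inr 0) = some a ∧ H'.tail (Sum.inr 1) = some a) ∧
  H'.gain (Sum.inr 0) ≠ H'.gain (Sum.inr 1)

/-- Henneberg move H1c: add a new vertex together with a loop with non-identity gain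
and one non-loop edge. -/
def IsH1c (H : GainGraph Γ V E) (H' : GainGraph Γ (Option V) (E ⊕ Fin 2)) : Prop :=
  (∀ e : E, H'.tail (Sum.inl e) = some (H.tail e) ∧ H'.head (Sum.inl e) = some (H.head e) ∧
    H'.gain (Sum.inl e) = H.gain e) ∧
  H'.tail (Sum.inr 0) = none ∧ H'.head (Sum.inr 0) = none ∧ H'.gain (Sum.inr 0) ≠ 1 ∧
  (∃ a : V, H'.tail (Sum.inr 1) = some a) ∧ H'.head (Sum.inr 1) = none

/-- The general Henneberg 2 move: delete the edge `e₀`, subdivide it by a new vertex into two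
edges whose gains compose to the gain of `e₀`, and add a third edge from `z` to the new vertex
such that every 2-cycle among the three new edges is unbalanced. -/
def IsH2 (H : GainGraph Γ V E) (e₀ : E) (z : V)
    (H' : GainGraph Γ (Option V) ({f : E // f ≠ e₀} ⊕ Fin 3)) : Prop :=
  (∀ f : {f : E // f ≠ e₀}, H'.tail (Sum.inl f) = some (H.tail f.1) ∧
    H'.head (Sum.inl f) = some (H.head f.1) ∧ H'.gain (Sum.inl f) = H.gain f.1) ∧
  (∀ i : Fin 3, H'.head (Sum.inr i) = none) ∧
  H'.tail (Sum.inr 0) = some (H.tail e₀) ∧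
  H'.tail (Sum.inr 1) = some (H.head e₀) ∧
  H'.gain (Sum.inr 0) * (H'.gain (Sum.inr 1))⁻¹ = H.gain e₀ ∧
  H'.tail (Sum.inr 2) = some z ∧
  (∀ i j : Fin 3, i ≠ j → H'.tail (Sum.inr i) = H'.tail (Sum.inr j) →
    H'.gain (Sum.inr i) ≠ H'.gain (Sum.inr j))

/-- Henneberg move H2a: the subdivided edge is not a loop, `z` not one of its endpoints. -/
def IsH2a (H : GainGraph Γ V E) (e₀ : E) (z : V)
    (H' : GainGraph Γ (Option V) ({f : E // f ≠ e₀} ⊕ Fin 3)) : Prop :=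
  H.tail e₀ ≠ H.head e₀ ∧ z ≠ H.tail e₀ ∧ z ≠ H.head e₀ ∧ IsH2 H e₀ z H'

/-- Henneberg move H2b: the subdivided edge is not a loop, `z` one of its endpoints. -/
def IsH2b (H : GainGraph Γ V E) (e₀ : E) (z : V)
    (H' : GainGraph Γ (Option V) ({f : E // f ≠ e₀} ⊕ Fin 3)) : Prop :=
  H.tail e₀ ≠ H.head e₀ ∧ (z = H.tail e₀ ∨ z = H.head e₀) ∧ IsH2 H e₀ z H'

/-- Henneberg move H2c: the subdivided edge is a loop, `z` not its vertex. -/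
def IsH2c (H : GainGraph Γ V E) (e₀ : E) (z : V)
    (H' : GainGraph Γ (Option V) ({f : E // f ≠ e₀} ⊕ Fin 3)) : Prop :=
  H.tail e₀ = H.head e₀ ∧ z ≠ H.tail e₀ ∧ IsH2 H e₀ z H'

/-- Henneberg move H2d: the subdivided edge is a loop, `z` its vertex. -/
def IsH2d (H : GainGraph Γ V E) (e₀ : E) (z : V)
    (H' : GainGraph Γ (Option V) ({f : E // f ≠ e₀} ⊕ Fin 3)) : Prop :=
  H.tail e₀ = H.head e₀ ∧ z = H.tail e₀ ∧ IsH2 H e₀ z H'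

/-- Tails of the six edges of `K₄` on four vertices. -/
def k4t : Fin 6 → Fin 4 := ![0, 0, 0, 1, 1, 2]

/-- Heads of the six edges of `K₄` on four vertices. -/
def k4h : Fin 6 → Fin 4 := ![1, 2, 3, 2, 3, 3]

/-- The vertex-to-`K₄` move at `v`: remove `v` and its incident edges, add a copy of `K₄`
with identity gains on all six edges, and reattach every removed edge at one of the new `K₄`
vertices, keeping its gain. -/
def IsVtoK4 (H : GainGraph Γ V E) (v : V)
    (H' : GainGraph Γ ({w : V // w ≠ v} ⊕ Fin 4) (E ⊕ Fin 6)) : Prop :=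
  ∃ σ : E → Fin 4,
    (∀ e : E,
      H'.gain (Sum.inl e) = H.gain e ∧
      (H.tail e = v → H'.tail (Sum.inl e) = Sum.inr (σ e)) ∧
      (∀ h : H.tail e ≠ v, H'.tail (Sum.inl e) = Sum.inl ⟨H.tail e, h⟩) ∧
      (H.head e = v → H'.head (Sum.inl e) = Sum.inr (σ e)) ∧
      (∀ h : H.head e ≠ v, H'.head (Sum.inl e) = Sum.inl ⟨H.head e, h⟩)) ∧
    (∀ i : Fin 6, H'.tail (Sum.inr i) = Sum.inr (k4t i) ∧ H'.head (Sum.inr i) = Sum.inr (k4h i) ∧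
      H'.gain (Sum.inr i) = 1)

/-- The vertex-to-4-cycle move at `v` (splitting `v` into `v₁, v₂` along the edges
`ea = (a,v)_α` and `eb = (b,v)_β`): the two chosen edges are doubled into the 4-cycle
`(a,v₁)_α, (a,v₂)_α, (b,v₁)_β, (b,v₂)_β`, and every other edge incident with `v` is
reattached at `v₁` or `v₂`, keeping its gain. -/
def IsVto4C (H : GainGraph Γ V E) (v : V) (ea eb : E)
    (H' : GainGraph Γ ({w : V // w ≠ v} ⊕ Fin 2) ({e : E // e ≠ ea ∧ e ≠ eb} ⊕ Fin 4)) : Prop :=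
  ea ≠ eb ∧
  ∃ (a b : V) (ha : a ≠ v) (hb : b ≠ v) (α β : Γ) (σ : E → Fin 2),
    H.EdgeIs ea a v α ∧ H.EdgeIs eb b v β ∧
    H'.EdgeIs (Sum.inr 0) (Sum.inl ⟨a, ha⟩) (Sum.inr 0) α ∧
    H'.EdgeIs (Sum.inr 1) (Sum.inl ⟨a, ha⟩) (Sum.inr 1) α ∧
    H'.EdgeIs (Sum.inr 2) (Sum.inl ⟨b, hb⟩) (Sum.inr 0) β ∧
    H'.EdgeIs (Sum.inr 3) (Sum.inl ⟨b, hb⟩) (Sum.inr 1) β ∧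
    ∀ e : {e : E // e ≠ ea ∧ e ≠ eb},
      H'.gain (Sum.inl e) = H.gain e.1 ∧
      (H.tail e.1 = v → H'.tail (Sum.inl e) = Sum.inr (σ e.1)) ∧
      (∀ h : H.tail e.1 ≠ v, H'.tail (Sum.inl e) = Sum.inl ⟨H.tail e.1, h⟩) ∧
      (H.head e.1 = v → H'.head (Sum.inl e) = Sum.inr (σ e.1)) ∧
      (∀ h : H.head e.1 ≠ v, H'.head (Sum.inl e) = Sum.inl ⟨H.head e.1, h⟩)

/-- The edge joining operation: the disjoint union of two gain graphs together with one new
connecting edge with arbitrary gain. -/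
def IsEdgeJoin {V₁ E₁ V₂ E₂ : Type*} (H₁ : GainGraph Γ V₁ E₁) (H₂ : GainGraph Γ V₂ E₂)
    (H : GainGraph Γ (V₁ ⊕ V₂) (E₁ ⊕ E₂ ⊕ Unit)) : Prop :=
  (∀ e : E₁, H.tail (Sum.inl e) = Sum.inl (H₁.tail e) ∧
    H.head (Sum.inl e) = Sum.inl (H₁.head e) ∧ H.gain (Sum.inl e) = H₁.gain e) ∧
  (∀ e : E₂, H.tail (Sum.inr (Sum.inl e)) = Sum.inr (H₂.tail e) ∧
    H.head (Sum.inr (Sum.inl e)) = Sum.inr (H₂.head e) ∧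
    H.gain (Sum.inr (Sum.inl e)) = H₂.gain e) ∧
  (∃ (a : V₁) (b : V₂),
    (H.tail (Sum.inr (Sum.inr ())) = Sum.inl a ∧ H.head (Sum.inr (Sum.inr ())) = Sum.inr b) ∨
    (H.tail (Sum.inr (Sum.inr ())) = Sum.inr b ∧ H.head (Sum.inr (Sum.inr ())) = Sum.inl a))

end Moves

section Bundled

variable (Γ : Type) [Group Γ]

/-- A gain graph bundled together with its vertex and edge types. -/
structure BGG where
  V : Type
  E : Type
  gg : GainGraph Γ V E

variable {Γ}

/-- Isomorphism of gain graphs: bijections on vertices and edges preserving incidence and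
gains (up to reversal of edge orientations). -/
def GGIso {V E V' E' : Type*} (H : GainGraph Γ V E) (H' : GainGraph Γ V' E') : Prop :=
  ∃ (fV : V ≃ V') (fE : E ≃ E'),
    ∀ e : E, H'.EdgeIs (fE e) (fV (H.tail e)) (fV (H.head e)) (H.gain e)

/-- A Henneberg 1a step between bundled gain graphs. -/
def StepH1a (X Y : BGG Γ) : Prop :=
  ∃ H' : GainGraph Γ (Option X.V) (X.E ⊕ Fin 2), IsH1a X.gg H' ∧ GGIso H' Y.gg

/-- A Henneberg 1b step between bundled gain graphs. -/
def StepH1b (X Y : BGG Γ) : Prop :=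
  ∃ H' : GainGraph Γ (Option X.V) (X.E ⊕ Fin 2), IsH1b X.gg H' ∧ GGIso H' Y.gg

/-- A Henneberg 1c step between bundled gain graphs. -/
def StepH1c (X Y : BGG Γ) : Prop :=
  ∃ H' : GainGraph Γ (Option X.V) (X.E ⊕ Fin 2), IsH1c X.gg H' ∧ GGIso H' Y.gg

/-- A Henneberg 2a step between bundled gain graphs. -/
def StepH2a (X Y : BGG Γ) : Prop :=
  ∃ (e₀ : X.E) (z : X.V) (H' : GainGraph Γ (Option X.V) ({f : X.E // f ≠ e₀} ⊕ Fin 3)),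
    IsH2a X.gg e₀ z H' ∧ GGIso H' Y.gg

/-- A Henneberg 2b step between bundled gain graphs. -/
def StepH2b (X Y : BGG Γ) : Prop :=
  ∃ (e₀ : X.E) (z : X.V) (H' : GainGraph Γ (Option X.V) ({f : X.E // f ≠ e₀} ⊕ Fin 3)),
    IsH2b X.gg e₀ z H' ∧ GGIso H' Y.gg

/-- A Henneberg 2c step between bundled gain graphs. -/
def StepH2c (X Y : BGG Γ) : Prop :=
  ∃ (e₀ : X.E) (z : X.V) (H' : GainGraph Γ (Option X.V) ({f : X.E // f ≠ e₀} ⊕ Fin 3)),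
    IsH2c X.gg e₀ z H' ∧ GGIso H' Y.gg

/-- A Henneberg 2d step between bundled gain graphs. -/
def StepH2d (X Y : BGG Γ) : Prop :=
  ∃ (e₀ : X.E) (z : X.V) (H' : GainGraph Γ (Option X.V) ({f : X.E // f ≠ e₀} ⊕ Fin 3)),
    IsH2d X.gg e₀ z H' ∧ GGIso H' Y.gg

/-- A vertex-to-`K₄` step between bundled gain graphs. -/
def StepVtoK4 (X Y : BGG Γ) : Prop :=
  ∃ (v : X.V) (H' : GainGraph Γ ({w : X.V // w ≠ v} ⊕ Fin 4) (X.E ⊕ Fin 6)),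
    IsVtoK4 X.gg v H' ∧ GGIso H' Y.gg

/-- A vertex-to-4-cycle step between bundled gain graphs. -/
def StepVto4C (X Y : BGG Γ) : Prop :=
  ∃ (v : X.V) (ea eb : X.E)
    (H' : GainGraph Γ ({w : X.V // w ≠ v} ⊕ Fin 2) ({e : X.E // e ≠ ea ∧ e ≠ eb} ⊕ Fin 4)),
    IsVto4C X.gg v ea eb H' ∧ GGIso H' Y.gg

/-- An edge joining step combining two bundled gain graphs. -/
def StepJoin (X Y Z : BGG Γ) : Prop :=
  ∃ H : GainGraph Γ (X.V ⊕ Y.V) (X.E ⊕ Y.E ⊕ Unit), IsEdgeJoin X.gg Y.gg H ∧ GGIso H Z.gg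

/-- The gain graphs constructible from the base graphs by the given (unary) construction
steps and the given (binary) joining steps. -/
inductive Constructed (base : BGG Γ → Prop) (step : BGG Γ → BGG Γ → Prop)
    (join : BGG Γ → BGG Γ → BGG Γ → Prop) : BGG Γ → Prop
  | base_mem {X : BGG Γ} : base X → Constructed base step join X
  | step_mem {X Y : BGG Γ} : Constructed base step join X → step X Y →
      Constructed base step join Y
  | join_mem {X Y Z : BGG Γ} : Constructed base step join X → Constructed base step join Y →
      join X Y Z → Constructed base step join Z

/-- `K₂`: a single edge with gain `g`. -/
def K2gg (g : Γ) : GainGraph Γ (Fin 2) Unit := ⟨fun _ => 0, fun _ => 1, fun _ => g⟩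

/-- `K₁`: a single vertex with no edges. -/
def K1gg : GainGraph Γ (Fin 1) Empty := ⟨fun e => e.elim, fun e => e.elim, fun e => e.elim⟩

/-- A single vertex carrying a loop with gain `g`. -/
def loopGG (g : Γ) : GainGraph Γ (Fin 1) Unit := ⟨fun _ => 0, fun _ => 0, fun _ => g⟩

/-- `K₄ + e`: a copy of `K₄` with identity gains together with one extra edge from `u` to `w`
with gain `g`. -/
def k4eGG (u w : Fin 4) (g : Γ) : GainGraph Γ (Fin 4) (Fin 6 ⊕ Unit) :=
  ⟨fun e => match e with | Sum.inl i => k4t i | Sum.inr _ => u,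
   fun e => match e with | Sum.inl i => k4h i | Sum.inr _ => w,
   fun e => match e with | Sum.inl _ => 1 | Sum.inr _ => g⟩

/-- Tails of the nine edges of `K₅ - e`. -/
def k5t : Fin 9 → Fin 5 := ![0, 0, 0, 0, 1, 1, 1, 2, 2]

/-- Heads of the nine edges of `K₅ - e`. -/
def k5h : Fin 9 → Fin 5 := ![1, 2, 3, 4, 2, 3, 4, 3, 4]

/-- `K₅ - e` with identity gain on every edge. -/
def k5eGG : GainGraph Γ (Fin 5) (Fin 9) := ⟨k5t, k5h, fun _ => 1⟩

end Bundled

/-- The canonical left action of `Γ` on the vertex set `Γ × V` of a covering graph. -/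
def coverAction (Γ : Type*) [Group Γ] (V : Type*) : Γ →* Equiv.Perm (Γ × V) where
  toFun x := Equiv.prodCongr (Equiv.mulLeft x) (Equiv.refl V)
  map_one' := by
    ext ⟨y, v⟩ <;> simp
  map_mul' x₁ x₂ := by
    ext ⟨y, v⟩ <;> simp [mul_assoc]

/-- The orbit-surface rigidity matrix of a gain graph `H` with configuration `q` of the
orbit representatives on the surface `M`. -/
def orbitSurfMat (M : Surf) {S : Subgroup OG} {V E : Type*} [DecidableEq V]
    (H : GainGraph S V E) (q : V → V3) : Matrix (E ⊕ V) (V × Fin 3) ℝ :=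
  fun r c =>
    match r with
    | Sum.inl e =>
        (if c.1 = H.tail e then (q (H.tail e) - (gmat (H.gain e)).mulVec (q (H.head e))) c.2
          else 0) +
        (if c.1 = H.head e then (q (H.head e) - (gmat ((H.gain e)⁻¹)).mulVec (q (H.tail e))) c.2
          else 0)
    | Sum.inr v => if c.1 = v then M.normal (q v) c.2 else 0

/-- `p` is an `S`-regular realisation: the orbit-surface rigidity matrix (with respect to the
quotient gain graph `H`, whose vertices are represented in `G` by `rep`) has maximal rank
among all `S`-symmetric realisations of `G` on `M`. -/
def SRegularWith (M : Surf) {S : Subgroup OG} {V E W : Type*}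
    [Fintype V] [Fintype E] [DecidableEq V]
    (H : GainGraph S V E) (θ : S →* Equiv.Perm W) (G : SimpleGraph W)
    (rep : V → W) (p : W → V3) : Prop :=
  ∀ q : W → V3, IsSymFramework M θ G q →
    (orbitSurfMat M H (fun v => q (rep v))).rank ≤ (orbitSurfMat M H (fun v => p (rep v))).rank

/-- The set of vertices covered by a finite set of undirected edges. -/
def sym2Support {W : Type*} [Fintype W] [DecidableEq W] (F : Finset (Sym2 W)) : Finset W :=
  Finset.univ.filter fun w => ∃ e ∈ F, w ∈ e

/-- A simple graph is `(2,2)`-tight: `|E| = 2|V| - 2` and every nonempty edge subset `F`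
satisfies `|F| ≤ 2|V(F)| - 2`. -/
def TwoTwoTight {W : Type*} [Fintype W] [DecidableEq W] (G : SimpleGraph W)
    [DecidableRel G.Adj] : Prop :=
  ((G.edgeFinset.card : ℤ) = 2 * (Fintype.card W : ℤ) - 2) ∧
  ∀ F : Finset (Sym2 W), F.Nonempty → F ⊆ G.edgeFinset →
    (F.card : ℤ) ≤ 2 * ((sym2Support F).card : ℤ) - 2

section Deg3

variable {Γ V E : Type*} [Group Γ]

/-- `w` is a neighbour of `v` in the gain graph `H`. -/
def GainGraph.Nbr (H : GainGraph Γ V E) (v w : V) : Prop :=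
  ∃ e : E, (H.tail e = v ∧ H.head e = w) ∨ (H.tail e = w ∧ H.head e = v)

/-- The edges `es` form a copy of `K₄` on the four (distinct) vertices `v₀, v₁, v₂, v₃`. -/
def GainGraph.IsK4On (H : GainGraph Γ V E) (v₀ v₁ v₂ v₃ : V) (es : Fin 6 → E) : Prop :=
  Function.Injective ![v₀, v₁, v₂, v₃] ∧ Function.Injective es ∧
  ∀ i : Fin 6, ∃ g : Γ,
    H.EdgeIs (es i) (![v₀, v₁, v₂, v₃] (k4t i)) (![v₀, v₁, v₂, v₃] (k4h i)) g

/-- The inverse Henneberg 2a move at `v`: delete `v` together with all edges incident with it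
and add one new edge from `x` to `y` (two neighbours of `v`). -/
def IsInvH2a (H : GainGraph Γ V E) (v x y : V) (hx : x ≠ v) (hy : y ≠ v)
    (H' : GainGraph Γ {w : V // w ≠ v} ({e : E // H.tail e ≠ v ∧ H.head e ≠ v} ⊕ Unit)) :
    Prop :=
  (∀ e : {e : E // H.tail e ≠ v ∧ H.head e ≠ v},
    H'.tail (Sum.inl e) = ⟨H.tail e.1, e.2.1⟩ ∧ H'.head (Sum.inl e) = ⟨H.head e.1, e.2.2⟩ ∧
    H'.gain (Sum.inl e) = H.gain e.1) ∧
  H'.tail (Sum.inr ()) = ⟨x, hx⟩ ∧ H'.head (Sum.inr ()) = ⟨y, hy⟩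

end Deg3

/-!
`G` is isomorphic to `H.cover`, whose edge sets are the sets `K ⊆ ℤ₂ × E` of lifted edges, so
`G` is `(2,2)`-sparse iff `|K| ≤ 2|V(K)| - 2` for all nonempty `K`. Both lifts of an edge set
`F` give `2|F| ≤ 4|V(F)| - 2`, i.e. the `-1` count; for balanced `F`, switch to identity gains
and take one lift per edge, which spans a single copy of `V(F)`, to get the `-2` count.

Conversely, let `K'` be the image of `K` under the deck swap. If `K ∩ K'` is nonempty, then
`K ∪ K'` and `K ∩ K'` are full preimages of edge sets, and adding their bounds gives the bound
for `K`, because `V(K ∪ K') = V(K) ∪ V(K')` and `V(K ∩ K') ⊆ V(K) ∩ V(K')`. Otherwise `K`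
projects bijectively onto some `F ⊆ E`; either `V(K)` projects injectively, and then the
sheets of the vertices of `V(K)` switch `F` to identity gains, so `F` is balanced, or
`|V(F)| < |V(K)|`.
-/

namespace GWalk

variable {H : GainGraph Γ V E}

def append : ∀ {u v w : V}, GWalk H u v → GWalk H v w → GWalk H u w
  | _, _, _, nil _, q => q
  | _, _, _, fwd e p, q => fwd e (append p q)
  | _, _, _, bwd e p, q => bwd e (append p q)

def reverse : ∀ {u v : V}, GWalk H u v → GWalk H v u
  | _, _, nil v => nil v
  | _, _, fwd e p => append (reverse p) (bwd e (nil _))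
  | _, _, bwd e p => append (reverse p) (fwd e (nil _))

lemma gainOf_append : ∀ {u v w : V} (p : GWalk H u v) (q : GWalk H v w),
    (p.append q).gainOf = p.gainOf * q.gainOf
  | _, _, _, nil _, q => by simp [append, gainOf]
  | _, _, _, fwd e p, q => by simp [append, gainOf, gainOf_append p q, mul_assoc]
  | _, _, _, bwd e p, q => by simp [append, gainOf, gainOf_append p q, mul_assoc]

lemma edgesOf_append : ∀ {u v w : V} (p : GWalk H u v) (q : GWalk H v w),
    (p.append q).edgesOf = p.edgesOf ++ q.edgesOf
  | _, _, _, nil _, q => by simp [append, edgesOf]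
  | _, _, _, fwd e p, q => by simp [append, edgesOf, edgesOf_append p q]
  | _, _, _, bwd e p, q => by simp [append, edgesOf, edgesOf_append p q]

lemma gainOf_reverse : ∀ {u v : V} (p : GWalk H u v), p.reverse.gainOf = p.gainOf⁻¹
  | _, _, nil _ => by simp [reverse, gainOf]
  | _, _, fwd e p => by simp [reverse, gainOf_append, gainOf, gainOf_reverse p]
  | _, _, bwd e p => by simp [reverse, gainOf_append, gainOf, gainOf_reverse p]

lemma mem_edgesOf_reverse : ∀ {u v : V} (p : GWalk H u v) {e : E},
    e ∈ p.reverse.edgesOf ↔ e ∈ p.edgesOf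
  | _, _, nil _, _ => by simp [reverse, edgesOf]
  | _, _, fwd f p, _ => by simp [reverse, edgesOf_append, edgesOf, mem_edgesOf_reverse p, or_comm]
  | _, _, bwd f p, _ => by simp [reverse, edgesOf_append, edgesOf, mem_edgesOf_reverse p, or_comm]

end GWalk

namespace GainGraph

open GWalk

variable {H : GainGraph Γ V E} {F : Set E}

lemma gainOf_eq_of_switching {φ : V → Γ} (hφ : ∀ e ∈ F, H.gain e = (φ (H.tail e))⁻¹ * φ (H.head e))
    {u v : V} (w : GWalk H u v) (hw : ∀ e ∈ w.edgesOf, e ∈ F) : w.gainOf = (φ u)⁻¹ * φ v := by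
  induction w with
  | nil v => simp [gainOf]
  | fwd e p ih =>
      simp only [edgesOf, List.mem_cons, forall_eq_or_imp] at hw
      simp [gainOf, ih hw.2, hφ e hw.1, mul_assoc]
  | bwd e p ih =>
      simp only [edgesOf, List.mem_cons, forall_eq_or_imp] at hw
      simp [gainOf, ih hw.2, hφ e hw.1, mul_assoc]

lemma SwitchTrivial.balanced (h : H.SwitchTrivial F) : H.Balanced F := by
  obtain ⟨φ, hφ⟩ := h
  intro v w hw
  rw [gainOf_eq_of_switching hφ w hw, inv_mul_cancel]

lemma Balanced.gainOf_eq (h : H.Balanced F) {u v : V} (p q : GWalk H u v)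
    (hp : ∀ e ∈ p.edgesOf, e ∈ F) (hq : ∀ e ∈ q.edgesOf, e ∈ F) : p.gainOf = q.gainOf := by
  have hcycle := h u (p.append q.reverse) fun e he => by
    rw [edgesOf_append, List.mem_append, mem_edgesOf_reverse] at he
    exact he.elim (hp e) (hq e)
  rwa [gainOf_append, gainOf_reverse, mul_inv_eq_one] at hcycle

variable (H) in
def walkSetoid (F : Set E) : Setoid V where
  r u v := ∃ w : GWalk H u v, ∀ e ∈ w.edgesOf, e ∈ F
  iseqv := by
    refine ⟨fun v => ⟨nil v, by simp [edgesOf]⟩, fun ⟨w, hw⟩ => ?_, fun ⟨p, hp⟩ ⟨q, hq⟩ => ?_⟩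
    · exact ⟨w.reverse, fun e he => hw e (mem_edgesOf_reverse w |>.1 he)⟩
    · refine ⟨p.append q, fun e he => ?_⟩
      rw [edgesOf_append, List.mem_append] at he
      exact he.elim (hp e) (hq e)

/-- The switching potential at `v` is the gain of an `F`-walk to `v` from a fixed
representative of the `F`-component of `v`. -/
lemma Balanced.switchTrivial (h : H.Balanced F) : H.SwitchTrivial F := by
  let s := H.walkSetoid F
  choose p hp using fun v : V => Quotient.mk_out (s := s) v
  refine ⟨fun v => (p v).gainOf, fun e he => ?_⟩
  have hsame : (⟦H.tail e⟧ : Quotient s) = ⟦H.head e⟧ :=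
    Quotient.sound ⟨fwd e (nil _), by simpa [edgesOf] using he⟩
  obtain ⟨q, hq, hqp⟩ : ∃ q : GWalk H (⟦H.tail e⟧ : Quotient s).out (H.head e),
      (∀ f ∈ q.edgesOf, f ∈ F) ∧ q.gainOf = (p (H.head e)).gainOf := by
    rw [hsame]
    exact ⟨_, hp _, rfl⟩
  have hpe : ((p (H.tail e)).append (fwd e (nil _))).gainOf = q.gainOf := by
    refine h.gainOf_eq _ _ (fun f hf => ?_) hq
    simp only [edgesOf_append, edgesOf, List.mem_append, List.mem_singleton] at hf
    exact hf.elim (hp _ f) fun hfe => hfe ▸ he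
  rw [gainOf_append, gainOf, gainOf, mul_one] at hpe
  show _ = _⁻¹ * (p (H.head e)).gainOf
  rw [← hqp, ← hpe, inv_mul_cancel_left]

end GainGraph

section Sparsity

variable {W W' : Type*} [Fintype W] [DecidableEq W] [Fintype W'] [DecidableEq W']

lemma sym2Support_image_map (f : W ≃ W') (F : Finset (Sym2 W)) :
    sym2Support (F.image (Sym2.map f)) = (sym2Support F).image f := by
  ext w
  simp only [sym2Support, Finset.mem_filter, Finset.mem_univ, true_and, Finset.mem_image,
    exists_exists_and_eq_and, Sym2.mem_map]
  exact ⟨fun ⟨e, he, a, ha, hw⟩ => ⟨a, ⟨e, he, ha⟩, hw⟩,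
    fun ⟨a, ⟨e, he, ha⟩, hw⟩ => ⟨e, he, a, ha, hw⟩⟩

lemma TwoTwoTight.of_iso {G : SimpleGraph W} {G' : SimpleGraph W'} [DecidableRel G.Adj]
    [DecidableRel G'.Adj] (φ : G ≃g G') (h : TwoTwoTight G) : TwoTwoTight G' := by
  obtain ⟨hcard, hsparse⟩ := h
  refine ⟨?_, fun F' hne hsub => ?_⟩
  · rwa [← φ.card_edgeFinset_eq, ← Fintype.card_congr φ.toEquiv]
  have hinj : Function.Injective (Sym2.map φ.symm) := Sym2.map.injective φ.symm.injective
  have hsub' : F'.image (Sym2.map φ.symm) ⊆ G.edgeFinset := by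
    intro z hz
    obtain ⟨z', hz', rfl⟩ := Finset.mem_image.1 hz
    rw [SimpleGraph.mem_edgeFinset]
    exact φ.symm.map_mem_edgeSet_iff.2 (SimpleGraph.mem_edgeFinset.1 (hsub hz'))
  have hsupp : sym2Support (F'.image (Sym2.map φ.symm)) = (sym2Support F').image φ.symm :=
    sym2Support_image_map φ.symm.toEquiv F'
  have := hsparse _ (hne.image _) hsub'
  rwa [Finset.card_image_of_injective _ hinj, hsupp,
    Finset.card_image_of_injective _ φ.symm.injective] at this

lemma twoTwoTight_congr {G : SimpleGraph W} {G' : SimpleGraph W'}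
    [DecidableRel G.Adj] [DecidableRel G'.Adj] (φ : G ≃g G') :
    TwoTwoTight G ↔ TwoTwoTight G' :=
  ⟨.of_iso φ, .of_iso φ.symm⟩

end Sparsity

namespace GainGraph

variable (H : GainGraph Γ V E)

def lift (q : Γ × E) : Sym2 (Γ × V) := s((q.1, H.tail q.2), (q.1 * H.gain q.2, H.head q.2))

def liftSpan [DecidableEq Γ] [DecidableEq V] (K : Finset (Γ × E)) : Finset (Γ × V) :=
  K.image (fun q => (q.1, H.tail q.2)) ∪ K.image (fun q => (q.1 * H.gain q.2, H.head q.2))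

variable {H}

lemma CoverSimple.lift_injective (hH : H.CoverSimple) : Function.Injective H.lift := hH.2

lemma CoverSimple.mem_edgeSet_cover (hH : H.CoverSimple) {z : Sym2 (Γ × V)} :
    z ∈ H.cover.edgeSet ↔ ∃ q, H.lift q = z := by
  induction z using Sym2.ind with
  | _ a b =>
    rw [SimpleGraph.mem_edgeSet, cover, SimpleGraph.fromRel_adj]
    constructor
    · rintro ⟨-, ⟨e, ha, hb, hg⟩ | ⟨e, hb, ha, hg⟩⟩
      · exact ⟨(a.1, e), by simp [lift, ← ha, ← hb, ← hg]⟩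
      · exact ⟨(b.1, e), by simp [lift, ← ha, ← hb, ← hg, Sym2.eq_swap]⟩
    · rintro ⟨⟨x, e⟩, hq⟩
      have hne : ((x, H.tail e) : Γ × V) ≠ (x * H.gain e, H.head e) := fun h =>
        hH.1 e ⟨(Prod.ext_iff.1 h).2, left_eq_mul.1 (Prod.ext_iff.1 h).1⟩
      rcases Sym2.eq_iff.1 hq with ⟨rfl, rfl⟩ | ⟨rfl, rfl⟩
      · exact ⟨hne, Or.inl ⟨e, rfl, rfl, rfl⟩⟩
      · exact ⟨hne.symm, Or.inr ⟨e, rfl, rfl, rfl⟩⟩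

variable [DecidableEq Γ] [DecidableEq V]

lemma sym2Support_image_lift [Fintype Γ] [Fintype V] (K : Finset (Γ × E)) :
    sym2Support (K.image H.lift) = H.liftSpan K := by
  ext w
  simp only [sym2Support, liftSpan, lift, Finset.mem_filter, Finset.mem_univ, true_and,
    Finset.mem_image, exists_exists_and_eq_and, Sym2.mem_iff, Finset.mem_union]
  constructor
  · rintro ⟨q, hq, rfl | rfl⟩
    exacts [Or.inl ⟨q, hq, rfl⟩, Or.inr ⟨q, hq, rfl⟩]
  · rintro (⟨q, hq, rfl⟩ | ⟨q, hq, rfl⟩)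
    exacts [⟨q, hq, Or.inl rfl⟩, ⟨q, hq, Or.inr rfl⟩]

lemma liftSpan_univ_prod [Fintype Γ] (F : Finset E) :
    H.liftSpan (Finset.univ ×ˢ F) = Finset.univ ×ˢ H.vSpan F := by
  ext ⟨x, v⟩
  simp only [liftSpan, vSpan, Finset.mem_union, Finset.mem_image, Finset.mem_product,
    Finset.mem_univ, true_and, Prod.exists, Prod.mk.injEq]
  constructor
  · rintro (⟨a, e, he, rfl, rfl⟩ | ⟨a, e, he, rfl, rfl⟩)
    exacts [Or.inl ⟨e, he, rfl⟩, Or.inr ⟨e, he, rfl⟩]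
  · rintro (⟨e, he, rfl⟩ | ⟨e, he, rfl⟩)
    exacts [Or.inl ⟨x, e, he, rfl, rfl⟩, Or.inr ⟨x * (H.gain e)⁻¹, e, he, by group, rfl⟩]

lemma image_snd_liftSpan [DecidableEq E] (K : Finset (Γ × E)) :
    (H.liftSpan K).image Prod.snd = H.vSpan (K.image Prod.snd) := by
  simp only [liftSpan, vSpan, Finset.image_union, Finset.image_image]
  rfl

lemma liftSpan_union [DecidableEq E] (K₁ K₂ : Finset (Γ × E)) :
    H.liftSpan (K₁ ∪ K₂) = H.liftSpan K₁ ∪ H.liftSpan K₂ := by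
  simp only [liftSpan, Finset.image_union]
  ac_rfl

lemma liftSpan_mono {K₁ K₂ : Finset (Γ × E)} (h : K₁ ⊆ K₂) : H.liftSpan K₁ ⊆ H.liftSpan K₂ :=
  Finset.union_subset_union (Finset.image_subset_image h) (Finset.image_subset_image h)

lemma liftSpan_image_coverAction [DecidableEq E] (x : Γ) (K : Finset (Γ × E)) :
    H.liftSpan (K.image (coverAction Γ E x)) = (H.liftSpan K).image (coverAction Γ V x) := by
  simp only [liftSpan, Finset.image_union, Finset.image_image]
  congr 1
  exact Finset.image_congr fun q _ => by simp [coverAction, mul_assoc]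

end GainGraph

namespace GainGraph

variable {H : GainGraph Γ V E} [DecidableEq Γ] [DecidableEq V]

variable (H) in
def LiftSparse : Prop :=
  ∀ K : Finset (Γ × E), K.Nonempty → (K.card : ℤ) ≤ 2 * (H.liftSpan K).card - 2

lemma CoverSimple.twoTwoTight_cover_iff [Fintype Γ] [Fintype V] [Fintype E]
    (hH : H.CoverSimple) [DecidableRel H.cover.Adj] :
    TwoTwoTight H.cover ↔
      (Fintype.card (Γ × E) : ℤ) = 2 * Fintype.card (Γ × V) - 2 ∧ H.LiftSparse := by
  have hedges : H.cover.edgeFinset = Finset.univ.image H.lift := by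
    ext z
    simp [hH.mem_edgeSet_cover]
  unfold TwoTwoTight
  rw [hedges, Finset.card_image_of_injective _ hH.lift_injective, Finset.card_univ]
  refine and_congr_right fun _ => ⟨fun h K hK => ?_, fun h F hF hsub => ?_⟩
  · have := h (K.image H.lift) (hK.image _) (Finset.image_subset_image K.subset_univ)
    rwa [Finset.card_image_of_injective _ hH.lift_injective, sym2Support_image_lift] at this
  · obtain ⟨K, -, rfl⟩ := Finset.subset_image_iff.1 hsub
    rw [Finset.card_image_of_injective _ hH.lift_injective, sym2Support_image_lift]
    exact h K (Finset.image_nonempty.1 hF)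

lemma LiftSparse.card_le_of_balanced (h : H.LiftSparse) {F : Finset E} (hF : F.Nonempty)
    (hbal : H.Balanced ↑F) : (F.card : ℤ) ≤ 2 * (H.vSpan F).card - 2 := by
  classical
  obtain ⟨φ, hφ⟩ := hbal.switchTrivial
  set K := F.image fun e => (φ (H.tail e), e)
  have hK : K.card = F.card :=
    Finset.card_image_of_injective _ fun a b hab => (Prod.ext_iff.1 hab).2
  have hspan : H.liftSpan K = (H.vSpan F).image fun v => (φ v, v) := by
    simp only [liftSpan, vSpan, K, Finset.image_union, Finset.image_image]
    congr 1
    exact Finset.image_congr fun e he => by simp [hφ e he]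
  have hbound := h K (hF.image _)
  have hcard : (H.liftSpan K).card ≤ (H.vSpan F).card := hspan ▸ Finset.card_image_le
  rw [hK] at hbound
  omega

lemma LiftSparse.card_le [Fintype Γ] (h : H.LiftSparse) {F : Finset E} (hF : F.Nonempty) :
    (F.card : ℤ) ≤ 2 * (H.vSpan F).card - 1 := by
  have hbound := h ((Finset.univ : Finset Γ) ×ˢ F) (Finset.univ_nonempty.product hF)
  rw [liftSpan_univ_prod, Finset.card_product, Finset.card_product, Finset.card_univ] at hbound
  have hΓ : 0 < Fintype.card Γ := Fintype.card_pos
  push_cast at hbound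
  nlinarith

lemma card_le_liftSpan_univ_prod [Fintype Γ] [Nontrivial Γ]
    (hgen : ∀ F : Finset E, F.Nonempty → (F.card : ℤ) ≤ 2 * (H.vSpan F).card - 1)
    {F : Finset E} (hF : F.Nonempty) :
    (((Finset.univ : Finset Γ) ×ˢ F).card : ℤ) ≤ 2 * (H.liftSpan (Finset.univ ×ˢ F)).card - 2 := by
  rw [liftSpan_univ_prod, Finset.card_product, Finset.card_product, Finset.card_univ]
  have hΓ : 1 < Fintype.card Γ := Fintype.one_lt_card
  have hbound := hgen F hF
  push_cast
  nlinarith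

lemma switchTrivial_image_snd {K : Finset (Γ × E)} [DecidableEq E]
    (hinj : Set.InjOn Prod.snd (H.liftSpan K : Set (Γ × V))) :
    H.SwitchTrivial (K.image Prod.snd : Set E) := by
  classical
  let φ : V → Γ := fun v => if h : ∃ x, (x, v) ∈ H.liftSpan K then h.choose else 1
  have hφ : ∀ x v, (x, v) ∈ H.liftSpan K → φ v = x := fun x v hxv => by
    have hex : ∃ x, (x, v) ∈ H.liftSpan K := ⟨x, hxv⟩
    simp only [φ, hex, dite_true]
    exact (Prod.ext_iff.1 (hinj hex.choose_spec hxv rfl)).1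
  refine ⟨φ, fun e he => ?_⟩
  obtain ⟨q, hq, rfl⟩ := Finset.mem_image.1 (Finset.mem_coe.1 he)
  have htail : φ (H.tail q.2) = q.1 :=
    hφ _ _ (Finset.mem_union_left _ (Finset.mem_image_of_mem (fun q => (q.1, H.tail q.2)) hq))
  have hhead : φ (H.head q.2) = q.1 * H.gain q.2 := hφ _ _ (Finset.mem_union_right _
    (Finset.mem_image_of_mem (fun q => (q.1 * H.gain q.2, H.head q.2)) hq))
  rw [htail, hhead, inv_mul_cancel_left]

lemma card_le_liftSpan_of_injOn [DecidableEq E]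
    (hbal : ∀ F : Finset E, F.Nonempty → H.Balanced ↑F →
      (F.card : ℤ) ≤ 2 * (H.vSpan F).card - 2)
    (hgen : ∀ F : Finset E, F.Nonempty → (F.card : ℤ) ≤ 2 * (H.vSpan F).card - 1)
    {K : Finset (Γ × E)} (hK : K.Nonempty) (hinj : Set.InjOn Prod.snd (K : Set (Γ × E))) :
    (K.card : ℤ) ≤ 2 * (H.liftSpan K).card - 2 := by
  have hFK : (K.image Prod.snd).card = K.card := Finset.card_image_of_injOn hinj
  have hspan := image_snd_liftSpan (H := H) K
  by_cases hA : Set.InjOn Prod.snd (H.liftSpan K : Set (Γ × V))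
  · have hcard : (H.vSpan (K.image Prod.snd)).card = (H.liftSpan K).card := by
      rw [← hspan]
      exact Finset.card_image_of_injOn hA
    have hbound := hbal _ (hK.image _) (switchTrivial_image_snd hA).balanced
    omega
  · have hlt : (H.vSpan (K.image Prod.snd)).card < (H.liftSpan K).card := by
      rw [← hspan]
      exact lt_of_le_of_ne Finset.card_image_le (mt Finset.card_image_iff.1 hA)
    have hbound := hgen (K.image Prod.snd) (hK.image _)
    omega

end GainGraph

section Z2

local notation "ℤ₂" => Multiplicative (ZMod 2)

namespace GainGraph

variable {H : GainGraph ℤ₂ V E} [DecidableEq V] [DecidableEq E]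

lemma eq_or_eq_ofAdd_one_mul : ∀ x y : ℤ₂, x = y ∨ x = .ofAdd 1 * y := by decide

lemma coverAction_ofAdd_one_involutive (α : Type*) :
    Function.Involutive (coverAction ℤ₂ α (.ofAdd 1)) := fun q => by
  rw [← Equiv.Perm.mul_apply, ← map_mul]
  exact congrFun (congrArg DFunLike.coe (map_one (coverAction ℤ₂ α))) q

lemma eq_univ_prod_of_image_coverAction_subset {K : Finset (ℤ₂ × E)}
    (hK : K.image (coverAction ℤ₂ E (.ofAdd 1)) ⊆ K) :
    K = Finset.univ ×ˢ K.image Prod.snd := by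
  refine Finset.Subset.antisymm (fun q hq => Finset.mem_product.2
    ⟨Finset.mem_univ _, Finset.mem_image_of_mem _ hq⟩) fun ⟨x, e⟩ hxe => ?_
  obtain ⟨⟨y, e⟩, hye, rfl⟩ := Finset.mem_image.1 (Finset.mem_product.1 hxe).2
  obtain rfl | rfl := eq_or_eq_ofAdd_one_mul x y
  · exact hye
  · exact hK (Finset.mem_image_of_mem _ hye)

lemma card_le_liftSpan_of_inter_nonempty
    (hgen : ∀ F : Finset E, F.Nonempty → (F.card : ℤ) ≤ 2 * (H.vSpan F).card - 1)
    {K : Finset (ℤ₂ × E)} (hKK : (K ∩ K.image (coverAction ℤ₂ E (.ofAdd 1))).Nonempty) :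
    (K.card : ℤ) ≤ 2 * (H.liftSpan K).card - 2 := by
  set τ := coverAction ℤ₂ E (.ofAdd 1)
  set τV := coverAction ℤ₂ V (.ofAdd 1)
  have hτ : Function.Involutive τ := coverAction_ofAdd_one_involutive E
  have hττ : (K.image τ).image τ = K := by
    rw [Finset.image_image, hτ.comp_self, Finset.image_id]
  have bound : ∀ L : Finset (ℤ₂ × E), L.Nonempty → L.image τ ⊆ L →
      (L.card : ℤ) ≤ 2 * (H.liftSpan L).card - 2 := fun L hL hinv => by
    rw [eq_univ_prod_of_image_coverAction_subset hinv]
    exact card_le_liftSpan_univ_prod hgen (hL.image _)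
  have hU := bound (K ∪ K.image τ) (hKK.mono Finset.inter_subset_union) <| by
    rw [Finset.image_union, hττ, Finset.union_comm]
  have hI := bound (K ∩ K.image τ) hKK <| by
    rw [Finset.image_inter _ _ hτ.injective, hττ, Finset.inter_comm]
  set A := H.liftSpan K
  have hspanU : H.liftSpan (K ∪ K.image τ) = A ∪ A.image τV := by
    rw [liftSpan_union, liftSpan_image_coverAction]
  have hspanI : H.liftSpan (K ∩ K.image τ) ⊆ A ∩ A.image τV := by
    refine Finset.subset_inter (liftSpan_mono Finset.inter_subset_left) ?_
    rw [← liftSpan_image_coverAction]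
    exact liftSpan_mono Finset.inter_subset_right
  have hcardK := Finset.card_union_add_card_inter K (K.image τ)
  have hcardA := Finset.card_union_add_card_inter A (A.image τV)
  rw [Finset.card_image_of_injective _ hτ.injective] at hcardK
  rw [Finset.card_image_of_injective _ τV.injective] at hcardA
  have := Finset.card_le_card hspanI
  rw [hspanU] at hU
  omega

lemma liftSparse_of_gainSparse
    (hbal : ∀ F : Finset E, F.Nonempty → H.Balanced ↑F →
      (F.card : ℤ) ≤ 2 * (H.vSpan F).card - 2)
    (hgen : ∀ F : Finset E, F.Nonempty → (F.card : ℤ) ≤ 2 * (H.vSpan F).card - 1) :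
    H.LiftSparse := by
  intro K hK
  by_cases hKK : (K ∩ K.image (coverAction ℤ₂ E (.ofAdd 1))).Nonempty
  · exact card_le_liftSpan_of_inter_nonempty hgen hKK
  refine card_le_liftSpan_of_injOn hbal hgen hK fun ⟨x, e⟩ hq ⟨y, e'⟩ hq' he => ?_
  obtain rfl : e = e' := he
  obtain rfl | rfl := eq_or_eq_ofAdd_one_mul x y
  · rfl
  · exact absurd ⟨_, Finset.mem_inter.2 ⟨hq, Finset.mem_image_of_mem _ hq'⟩⟩ hKK

theorem CoverSimple.twoTwoTight_cover_iff_gainTight [Fintype V] [Fintype E]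
    (hH : H.CoverSimple) [DecidableRel H.cover.Adj] :
    TwoTwoTight H.cover ↔ H.GainTight 2 2 1 := by
  have hcard : Fintype.card ℤ₂ = 2 := rfl
  rw [hH.twoTwoTight_cover_iff, Fintype.card_prod, Fintype.card_prod, hcard]
  constructor
  · rintro ⟨hcount, hsparse⟩
    exact ⟨by push_cast at hcount; omega, fun F hF hb => hsparse.card_le_of_balanced hF hb,
      fun F hF => hsparse.card_le hF⟩
  · rintro ⟨hcount, hbal, hgen⟩
    exact ⟨by push_cast; omega, liftSparse_of_gainSparse hbal hgen⟩

end GainGraph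

end Z2

theorem statement8_general
    {W V E : Type} [Fintype W] [DecidableEq W] [Fintype V] [Fintype E]
    [DecidableEq V]
    (G : SimpleGraph W) [DecidableRel G.Adj]
    (θ : Multiplicative (ZMod 2) →* Equiv.Perm W)
    (H : GainGraph (Multiplicative (ZMod 2)) V E) (hquot : IsQuotientOf G θ H) :
    TwoTwoTight G ↔ H.GainTight 2 2 1 := by
  classical
  obtain ⟨hH, φ, -⟩ := hquot
  exact (twoTwoTight_congr φ).symm.trans hH.twoTwoTight_cover_iff_gainTight

/-- Proposition `prop:22tight`: for the group `ℤ₂` acting freely on the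
vertices and edges of a simple graph `G`, `G` is `(2,2)`-tight if and only if its quotient
gain graph is `(2,2,1)`-gain-tight. -/
theorem statement8
    {W V E : Type} [Fintype W] [DecidableEq W] [Fintype V] [Fintype E]
    [DecidableEq V] [DecidableEq E]
    (G : SimpleGraph W) [DecidableRel G.Adj]
    (θ : Multiplicative (ZMod 2) →* Equiv.Perm W)
    (hfreeV : FreeGraphAction G θ)
    (hfreeE : ∀ x : Multiplicative (ZMod 2), x ≠ 1 → ∀ e ∈ G.edgeSet, Sym2.map (θ x) e ≠ e)
    (H : GainGraph (Multiplicative (ZMod 2)) V E) (hquot : IsQuotientOf G θ H) :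
    TwoTwoTight G ↔ H.GainTight 2 2 1 :=
  statement8_general G θ H hquot

end SymSurf
end
end

section
/- Let S be a group, G a simple graph on which S acts freely, and (G_0,ψ) its quotient S-gain graph. Then (G_0,ψ) is (2,3,3)-gain-tight if and only if (G_0,ψ) can be constructed sequentially from K_2 (a single edge) by H1a and H2a operations. -/
open Matrix Real

noncomputable section

namespace SymSurf


variable {Γ V E : Type*} [Group Γ]

/-!
The gains play no role in the counting: a `(2,3)`-sparse gain graph has no loops and no parallel
edges, and the balanced-set clause of `GainTight 2 3 3` is implied by the plain count.

Both moves preserve tightness. An edge set of the extended graph that meets the new vertex spans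
one vertex more than its old edges do, and has at most two new edges unless it contains both
halves of the edge `e₀` subdivided by an H2a move; such a set is compared with the edge set of the
old graph in which `e₀` replaces its two halves.

Conversely, the degrees of a tight graph sum to `4|V| - 6`, so some vertex `v` has degree at
most 3, and every degree is at least 2. If `v` has degree 2, the graph is an H1a extension of
`H - v`. If `v` has neighbours `a, b, c`, then not every pair of them lies in a common tight
edge set of `H - v`: the union of three such sets would be a tight set spanning `a, b, c`, and
adding the three edges at `v` to it would violate sparsity. Adding an edge `ab` for a free pair,
with the gain of the path `a v b`, keeps `H - v` tight, and `H` is the H2a extension of that graph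
which subdivides `ab` and joins the new vertex to `c`.
-/

namespace GainGraph

variable {V' E' ι : Type*}

def ends (H : GainGraph Γ V E) (e : E) : Sym2 V := s(H.tail e, H.head e)

lemma EdgeIs.ends_eq {H : GainGraph Γ V E} {e : E} {u w : V} {g : Γ} (h : H.EdgeIs e u w g) :
    H.ends e = s(u, w) := by
  rcases h with ⟨rfl, rfl, -⟩ | ⟨rfl, rfl, -⟩
  · rfl
  · exact Sym2.eq_swap

lemma exists_edgeIs_of_mem_ends {H : GainGraph Γ V E} {e : E} {v : V} (hv : v ∈ H.ends e) :
    ∃ (u : V) (g : Γ), H.EdgeIs e u v g := by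
  rcases Sym2.mem_iff.1 hv with rfl | rfl
  · exact ⟨H.head e, (H.gain e)⁻¹, Or.inr ⟨rfl, rfl, (inv_inv _).symm⟩⟩
  · exact ⟨H.tail e, H.gain e, Or.inl ⟨rfl, rfl, rfl⟩⟩

variable [DecidableEq V]

lemma mem_vSpan {H : GainGraph Γ V E} {F : Finset E} {x : V} :
    x ∈ H.vSpan F ↔ ∃ e ∈ F, x ∈ H.ends e := by
  simp only [vSpan, ends, Finset.mem_union, Finset.mem_image, Sym2.mem_iff]
  grind

lemma mem_vSpan_of_mem_ends {H : GainGraph Γ V E} {F : Finset E} {e : E} {x : V} (he : e ∈ F)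
    (hx : x ∈ H.ends e) : x ∈ H.vSpan F :=
  mem_vSpan.2 ⟨e, he, hx⟩

lemma vSpan_mono {H : GainGraph Γ V E} {F F' : Finset E} (h : F ⊆ F') :
    H.vSpan F ⊆ H.vSpan F' := fun _ hx => by
  obtain ⟨e, he, hx⟩ := mem_vSpan.1 hx
  exact mem_vSpan_of_mem_ends (h he) hx

lemma vSpan_union [DecidableEq E] (H : GainGraph Γ V E) (A B : Finset E) :
    H.vSpan (A ∪ B) = H.vSpan A ∪ H.vSpan B := by
  ext x
  simp only [mem_vSpan, Finset.mem_union]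
  grind

lemma vSpan_map [DecidableEq V'] {H : GainGraph Γ V E} {H' : GainGraph Γ V' E'} (fV : V' ↪ V)
    (fE : E' ↪ E) (h : ∀ e, (H'.ends e).map fV = H.ends (fE e)) (F : Finset E') :
    H.vSpan (F.map fE) = (H'.vSpan F).map fV := by
  ext x
  simp only [mem_vSpan, Finset.mem_map]
  constructor
  · rintro ⟨_, ⟨e, he, rfl⟩, hx⟩
    obtain ⟨y, hy, rfl⟩ := Sym2.mem_map.1 ((h e).symm ▸ hx)
    exact ⟨y, ⟨e, he, hy⟩, rfl⟩
  · rintro ⟨y, ⟨e, he, hy⟩, rfl⟩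
    exact ⟨fE e, ⟨e, he, rfl⟩, h e ▸ Sym2.mem_map.2 ⟨y, hy, rfl⟩⟩

def Sparse (H : GainGraph Γ V E) : Prop :=
  ∀ F : Finset E, F.Nonempty → (F.card : ℤ) ≤ 2 * (H.vSpan F).card - 3

def Tight (H : GainGraph Γ V E) (F : Finset E) : Prop :=
  (F.card : ℤ) = 2 * (H.vSpan F).card - 3

theorem gainTight_iff [Fintype V] [Fintype E] (H : GainGraph Γ V E) :
    H.GainTight 2 3 3 ↔ (Fintype.card E : ℤ) = 2 * Fintype.card V - 3 ∧ H.Sparse :=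
  ⟨fun ⟨hc, _, hs⟩ => ⟨hc, hs⟩, fun ⟨hc, hs⟩ => ⟨hc, fun F hF _ => hs F hF, hs⟩⟩

theorem Sparse.comap [DecidableEq V'] {H : GainGraph Γ V E} {H' : GainGraph Γ V' E'}
    (hsp : H.Sparse) (fV : V' ↪ V) (fE : E' ↪ E)
    (h : ∀ e, (H'.ends e).map fV = H.ends (fE e)) : H'.Sparse := fun F hF => by
  simpa [vSpan_map fV fE h] using hsp (F.map fE) (hF.map)

lemma tight_map_iff [DecidableEq V'] {H : GainGraph Γ V E} {H' : GainGraph Γ V' E'}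
    (fV : V' ↪ V) (fE : E' ↪ E) (h : ∀ e, (H'.ends e).map fV = H.ends (fE e)) (F : Finset E') :
    H.Tight (F.map fE) ↔ H'.Tight F := by
  simp [Tight, vSpan_map fV fE h]

section Sparse

variable {H : GainGraph Γ V E}

lemma Sparse.tail_ne_head (hsp : H.Sparse) (e : E) : H.tail e ≠ H.head e := by
  intro he
  have hsub : H.vSpan {e} ⊆ {H.tail e} := by simp [vSpan, he]
  have := hsp {e} (Finset.singleton_nonempty e)
  have := Finset.card_le_card hsub
  simp only [Finset.card_singleton] at *
  omega

lemma Sparse.ends_injective (hsp : H.Sparse) : Function.Injective H.ends := by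
  classical
  intro e f hef
  by_contra hne
  have hsub : H.vSpan {e, f} ⊆ {H.tail e, H.head e} := fun x hx => by
    obtain ⟨d, hd, hxd⟩ := mem_vSpan.1 hx
    rcases Finset.mem_insert.1 hd with rfl | hd
    · simpa [ends] using hxd
    · rw [Finset.mem_singleton.1 hd, ← hef] at hxd
      simpa [ends] using hxd
  have := hsp {e, f} (Finset.insert_nonempty _ _)
  have := (Finset.card_le_card hsub).trans Finset.card_le_two
  rw [Finset.card_pair hne] at *
  omega

lemma Sparse.ne_of_edgeIs (hsp : H.Sparse) {e : E} {u w : V} {g : Γ} (h : H.EdgeIs e u w g) :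
    u ≠ w := by
  rintro rfl
  rcases h with ⟨h1, h2, -⟩ | ⟨h1, h2, -⟩ <;> exact hsp.tail_ne_head e (h1.trans h2.symm)

lemma Sparse.card_le [Fintype V] [Fintype E] [Nonempty E] (hsp : H.Sparse) :
    (Fintype.card E : ℤ) ≤ 2 * Fintype.card V - 3 := by
  have := hsp Finset.univ Finset.univ_nonempty
  have := Finset.card_le_univ (H.vSpan Finset.univ)
  simp only [Finset.card_univ] at *
  omega

end Sparse

def addVertex (H : GainGraph Γ V E) (t : ι → V) (g : ι → Γ) : GainGraph Γ (Option V) (E ⊕ ι) :=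
  ⟨Sum.elim (some ∘ H.tail) (some ∘ t), Sum.elim (some ∘ H.head) fun _ => none,
    Sum.elim H.gain g⟩

def deleteEdge (H : GainGraph Γ V E) (e₀ : E) : GainGraph Γ V {f // f ≠ e₀} :=
  ⟨fun f => H.tail f, fun f => H.head f, fun f => H.gain f⟩

def addEdge (H : GainGraph Γ V E) (a b : V) (g : Γ) : GainGraph Γ V (Option E) :=
  ⟨fun e => e.elim a H.tail, fun e => e.elim b H.head, fun e => e.elim g H.gain⟩

def deleteVertex (H : GainGraph Γ V E) (v : V) : GainGraph Γ {w // w ≠ v} {e // v ∉ H.ends e} :=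
  ⟨fun e => ⟨H.tail e, fun h => e.2 (Sym2.mem_iff.2 (Or.inl h.symm))⟩,
    fun e => ⟨H.head e, fun h => e.2 (Sym2.mem_iff.2 (Or.inr h.symm))⟩, fun e => H.gain e⟩

theorem Sparse.deleteEdge {H : GainGraph Γ V E} (hsp : H.Sparse) (e₀ : E) :
    (H.deleteEdge e₀).Sparse :=
  hsp.comap (Function.Embedding.refl V) (Function.Embedding.subtype _) fun _ =>
    congrFun Sym2.map_id' _

theorem Sparse.deleteVertex {H : GainGraph Γ V E} (hsp : H.Sparse) (v : V) :
    (H.deleteVertex v).Sparse :=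
  hsp.comap (Function.Embedding.subtype _) (Function.Embedding.subtype _) fun _ => rfl

end GainGraph

open GainGraph

lemma card_subtype_ne_add_one {α : Type*} [Fintype α] [DecidableEq α] (a : α) :
    Fintype.card {b // b ≠ a} + 1 = Fintype.card α := by
  rw [← Fintype.card_option, Fintype.card_congr (Equiv.optionSubtypeNe a)]

lemma card_add_one_le_of_some_mem {α : Type*} {S : Finset α} {T : Finset (Option α)}
    (hS : ∀ x ∈ S, some x ∈ T) (hT : none ∈ T) : S.card + 1 ≤ T.card := by
  rw [← Finset.card_insertNone]
  refine Finset.card_le_card fun o ho => ?_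
  cases o with
  | none => exact hT
  | some x => exact hS x (Finset.mem_insertNone.1 ho x rfl)

def IsVertexExtension {ι : Type*} (H₀ : GainGraph Γ V E) (H' : GainGraph Γ (Option V) (E ⊕ ι))
    (t : ι → V) : Prop :=
  (∀ f, H'.ends (.inl f) = (H₀.ends f).map some) ∧ ∀ i, H'.ends (.inr i) = s(some (t i), none)

namespace IsVertexExtension

variable [DecidableEq V] {ι : Type*} {H₀ : GainGraph Γ V E} {H' : GainGraph Γ (Option V) (E ⊕ ι)}
  {t : ι → V} {F : Finset (E ⊕ ι)}

lemma some_mem_vSpan (hX : IsVertexExtension H₀ H' t) {x : V} (hx : x ∈ H₀.vSpan F.toLeft) :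
    some x ∈ H'.vSpan F := by
  obtain ⟨f, hf, hx⟩ := mem_vSpan.1 hx
  exact mem_vSpan_of_mem_ends (Finset.mem_toLeft.1 hf) (hX.1 f ▸ Sym2.mem_map.2 ⟨x, hx, rfl⟩)

lemma some_mem_vSpan_of_mem_toRight (hX : IsVertexExtension H₀ H' t) {i : ι}
    (hi : i ∈ F.toRight) : some (t i) ∈ H'.vSpan F :=
  mem_vSpan_of_mem_ends (Finset.mem_toRight.1 hi) (hX.2 i ▸ Sym2.mem_mk_left _ _)

lemma none_mem_vSpan (hX : IsVertexExtension H₀ H' t) {i : ι} (hi : i ∈ F.toRight) :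
    none ∈ H'.vSpan F :=
  mem_vSpan_of_mem_ends (Finset.mem_toRight.1 hi) (hX.2 i ▸ Sym2.mem_mk_right _ _)

theorem card_le (hX : IsVertexExtension H₀ H' t) (hsp : H₀.Sparse) (ht : Function.Injective t)
    (hF : F.Nonempty) (hR : F.toRight.card ≤ 2) :
    (F.card : ℤ) ≤ 2 * (H'.vSpan F).card - 3 := by
  have hLR := Finset.card_toLeft_add_card_toRight (u := F)
  rcases F.toRight.eq_empty_or_nonempty with hR0 | ⟨i, hi⟩
  · rw [hR0, Finset.card_empty] at hLR
    have := hsp F.toLeft (Finset.card_pos.1 (by have := hF.card_pos; omega))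
    have := Finset.card_le_card_of_injOn (s := H₀.vSpan F.toLeft) (t := H'.vSpan F) some
      (fun x hx => hX.some_mem_vSpan hx) (Option.some_injective _).injOn
    omega
  have hR' := card_add_one_le_of_some_mem (S := F.toRight.image t) (T := H'.vSpan F)
    (fun x hx => by
      obtain ⟨j, hj, rfl⟩ := Finset.mem_image.1 hx
      exact hX.some_mem_vSpan_of_mem_toRight hj) (hX.none_mem_vSpan hi)
  rw [Finset.card_image_of_injective _ ht] at hR'
  have := hF.card_pos
  rcases F.toLeft.eq_empty_or_nonempty with hL0 | hL
  · rw [hL0, Finset.card_empty] at hLR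
    omega
  · have := hsp _ hL
    have := card_add_one_le_of_some_mem (fun x hx => hX.some_mem_vSpan hx) (hX.none_mem_vSpan hi)
    omega

theorem card_le_of_halves_mem [Fintype ι] {H : GainGraph Γ V E} {e₀ : E}
    {H' : GainGraph Γ (Option V) ({f // f ≠ e₀} ⊕ ι)} {F : Finset ({f // f ≠ e₀} ⊕ ι)}
    (hX : IsVertexExtension (H.deleteEdge e₀) H' t) (hsp : H.Sparse) (hι : Fintype.card ι ≤ 3)
    {i₀ i₁ : ι} (h₀ : t i₀ = H.tail e₀) (h₁ : t i₁ = H.head e₀) (hi₀ : i₀ ∈ F.toRight)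
    (hi₁ : i₁ ∈ F.toRight) : (F.card : ℤ) ≤ 2 * (H'.vSpan F).card - 3 := by
  classical
  -- compare with the edge set of `H` in which `e₀` replaces its two halves
  set G := insert e₀ (F.toLeft.map (Function.Embedding.subtype _))
  have hG : G.card = F.toLeft.card + 1 :=
    by rw [Finset.card_insert_of_notMem (by simp), Finset.card_map]
  have hsub : ∀ x ∈ H.vSpan G, some x ∈ H'.vSpan F := by
    intro x hx
    obtain ⟨e, he, hxe⟩ := mem_vSpan.1 hx
    rcases Finset.mem_insert.1 he with rfl | he
    · rcases Sym2.mem_iff.1 hxe with rfl | rfl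
      · exact h₀ ▸ hX.some_mem_vSpan_of_mem_toRight hi₀
      · exact h₁ ▸ hX.some_mem_vSpan_of_mem_toRight hi₁
    · obtain ⟨f, hf, rfl⟩ := Finset.mem_map.1 he
      exact hX.some_mem_vSpan (mem_vSpan_of_mem_ends hf hxe)
  have := card_add_one_le_of_some_mem hsub (hX.none_mem_vSpan hi₀)
  have := hsp G (Finset.insert_nonempty _ _)
  have := Finset.card_toLeft_add_card_toRight (u := F)
  have := (Finset.card_le_univ F.toRight).trans hι
  omega

end IsVertexExtension

section Backward

variable {H : GainGraph Γ V E}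

lemma IsH1a.isVertexExtension {H' : GainGraph Γ (Option V) (E ⊕ Fin 2)} (h : IsH1a H H') :
    ∃ t : Fin 2 → V, Function.Injective t ∧ IsVertexExtension H H' t := by
  obtain ⟨hcopy, hhead, a, b, hab, ha, hb⟩ := h
  refine ⟨![a, b], by simpa [Fin.cons_injective_iff] using hab, fun e => ?_, fun i => ?_⟩
  · simp [ends, (hcopy e).1, (hcopy e).2.1]
  · fin_cases i <;> simp [ends, hhead, ha, hb]

lemma IsH2a.isVertexExtension {e₀ : E} {z : V}
    {H' : GainGraph Γ (Option V) ({f // f ≠ e₀} ⊕ Fin 3)} (h : IsH2a H e₀ z H') :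
    IsVertexExtension (H.deleteEdge e₀) H' ![H.tail e₀, H.head e₀, z] := by
  obtain ⟨-, -, -, hcopy, hhead, h0, h1, -, h2, -⟩ := h
  refine ⟨fun f => ?_, fun i => ?_⟩
  · simp [ends, deleteEdge, (hcopy f).1, (hcopy f).2.1]
  · fin_cases i <;> simp [ends, hhead, h0, h1, h2]

variable [DecidableEq V]

theorem IsH1a.sparse {H' : GainGraph Γ (Option V) (E ⊕ Fin 2)} (h : IsH1a H H')
    (hsp : H.Sparse) : H'.Sparse := by
  obtain ⟨t, ht, hX⟩ := h.isVertexExtension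
  exact fun F hF => hX.card_le hsp ht hF ((Finset.card_le_univ _).trans (by simp))

theorem IsH2a.sparse {e₀ : E} {z : V} {H' : GainGraph Γ (Option V) ({f // f ≠ e₀} ⊕ Fin 3)}
    (h : IsH2a H e₀ z H') (hsp : H.Sparse) : H'.Sparse := by
  have hX := h.isVertexExtension
  have ht : Function.Injective ![H.tail e₀, H.head e₀, z] := by
    obtain ⟨h01, hz0, hz1, -⟩ := h
    intro i j
    fin_cases i <;> fin_cases j <;> simp_all [eq_comm]
  intro F hF
  by_cases h01 : 0 ∈ F.toRight ∧ 1 ∈ F.toRight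
  · exact hX.card_le_of_halves_mem hsp (by simp) rfl rfl h01.1 h01.2
  refine hX.card_le (hsp.deleteEdge e₀) ht hF ?_
  have hne : F.toRight ≠ Finset.univ := fun h => h01 (h ▸ ⟨Finset.mem_univ _, Finset.mem_univ _⟩)
  have := Finset.card_lt_card (Finset.ssubset_univ_iff.2 hne)
  simp only [Finset.card_univ, Fintype.card_fin] at this
  omega

variable [Fintype V] [Fintype E]

theorem IsH1a.gainTight {H' : GainGraph Γ (Option V) (E ⊕ Fin 2)} (h : IsH1a H H')
    (ht : H.GainTight 2 3 3) : H'.GainTight 2 3 3 := by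
  obtain ⟨hcount, hsp⟩ := (gainTight_iff H).1 ht
  refine (gainTight_iff H').2 ⟨?_, h.sparse hsp⟩
  simp only [Fintype.card_option, Fintype.card_sum, Fintype.card_fin]
  push_cast
  omega

theorem IsH2a.gainTight [DecidableEq E] {e₀ : E} {z : V}
    {H' : GainGraph Γ (Option V) ({f // f ≠ e₀} ⊕ Fin 3)} (h : IsH2a H e₀ z H')
    (ht : H.GainTight 2 3 3) : H'.GainTight 2 3 3 := by
  obtain ⟨hcount, hsp⟩ := (gainTight_iff H).1 ht
  have := card_subtype_ne_add_one e₀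
  refine (gainTight_iff H').2 ⟨?_, h.sparse hsp⟩
  simp only [Fintype.card_option, Fintype.card_sum, Fintype.card_fin]
  push_cast
  omega

end Backward

abbrev H1aH2aConstructible {Γ : Type} [Group Γ] : BGG Γ → Prop :=
  Constructed (fun X => ∃ g : Γ, GGIso (K2gg g) X.gg) (fun X Y => StepH1a X Y ∨ StepH2a X Y)
    (fun _ _ _ => False)

section BackwardBundled

variable {Γ : Type} [Group Γ] {V' E' : Type*} {H : GainGraph Γ V E} {H' : GainGraph Γ V' E'}

theorem GGIso.gainTight [Fintype V] [Fintype E] [DecidableEq V] [Fintype V'] [Fintype E']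
    [DecidableEq V'] (h : GGIso H H') (ht : H.GainTight 2 3 3) : H'.GainTight 2 3 3 := by
  obtain ⟨fV, fE, hf⟩ := h
  obtain ⟨hcount, hsp⟩ := (gainTight_iff H).1 ht
  refine (gainTight_iff H').2 ⟨by rwa [← Fintype.card_congr fV, ← Fintype.card_congr fE],
    hsp.comap fV.symm.toEmbedding fE.symm.toEmbedding fun e => ?_⟩
  have := (hf (fE.symm e)).ends_eq
  rw [fE.apply_symm_apply] at this
  rw [this]
  simp [ends]

lemma GGIso.finite [Finite V'] [Finite E'] (h : GGIso H H') : Finite V ∧ Finite E :=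
  let ⟨fV, fE, _⟩ := h
  ⟨Finite.of_equiv _ fV.symm, Finite.of_equiv _ fE.symm⟩

theorem gainTight_K2gg (g : Γ) : (K2gg g).GainTight 2 3 3 := by
  refine (gainTight_iff _).2 ⟨by simp, fun F hF => ?_⟩
  obtain ⟨e, he⟩ := hF
  have := Finset.one_lt_card.2
    ⟨0, mem_vSpan_of_mem_ends (H := K2gg g) he (Sym2.mem_mk_left _ _),
      1, mem_vSpan_of_mem_ends (H := K2gg g) he (Sym2.mem_mk_right _ _), by decide⟩
  have := Finset.card_le_univ F
  simp only [Fintype.card_unit] at this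
  omega

lemma finite_of_step {X Y : BGG Γ} [Finite Y.V] [Finite Y.E] (h : StepH1a X Y ∨ StepH2a X Y) :
    Finite X.V ∧ Finite X.E := by
  classical
  rcases h with ⟨_, -, hiso⟩ | ⟨e₀, -, _, -, hiso⟩ <;> obtain ⟨hV, hE⟩ := hiso.finite
  · exact ⟨.of_injective _ (Option.some_injective _),
      .of_injective (Sum.inl : X.E → X.E ⊕ Fin 2) Sum.inl_injective⟩
  · have : Finite {f // f ≠ e₀} :=
      .of_injective (Sum.inl : {f // f ≠ e₀} → _ ⊕ Fin 3) Sum.inl_injective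
    exact ⟨.of_injective _ (Option.some_injective _), .of_equiv _ (Equiv.optionSubtypeNe e₀)⟩

theorem gainTight_of_constructible {X : BGG Γ} (hX : H1aH2aConstructible X) :
    ∀ [Fintype X.V] [Fintype X.E] [DecidableEq X.V], X.gg.GainTight 2 3 3 := by
  induction hX with
  | base_mem h =>
    obtain ⟨g, hg⟩ := h
    exact hg.gainTight (gainTight_K2gg g)
  | @step_mem X Y _ hstep ih =>
    intros
    classical
    obtain ⟨_, _⟩ := finite_of_step hstep
    let := Fintype.ofFinite X.V
    let := Fintype.ofFinite X.E
    rcases hstep with ⟨H', hm, hiso⟩ | ⟨e₀, z, H', hm, hiso⟩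
    exacts [hiso.gainTight (hm.gainTight ih), hiso.gainTight (hm.gainTight ih)]
  | join_mem _ _ h => exact h.elim

end BackwardBundled

namespace GainGraph

variable [DecidableEq V]

section Tight

variable [DecidableEq E] {H : GainGraph Γ V E}

lemma card_vSpan_union_add_card_inter (H : GainGraph Γ V E) (A B : Finset E) :
    (H.vSpan (A ∪ B)).card + (H.vSpan A ∩ H.vSpan B).card =
      (H.vSpan A).card + (H.vSpan B).card := by
  rw [vSpan_union]
  exact Finset.card_union_add_card_inter _ _

lemma Sparse.card_inter_le (hsp : H.Sparse) {A B : Finset E} (h : (A ∩ B).Nonempty) :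
    ((A ∩ B).card : ℤ) ≤ 2 * (H.vSpan A ∩ H.vSpan B).card - 3 := by
  have := Finset.card_le_card (Finset.subset_inter
    (vSpan_mono (H := H) (Finset.inter_subset_left : A ∩ B ⊆ A))
    (vSpan_mono (H := H) (Finset.inter_subset_right : A ∩ B ⊆ B)))
  have := hsp _ h
  omega

lemma Sparse.inter_eq_empty (hsp : H.Sparse) {A B : Finset E}
    (h : ¬ 2 ≤ (H.vSpan A ∩ H.vSpan B).card) : A ∩ B = ∅ := by
  refine Finset.not_nonempty_iff_eq_empty.1 fun hne => h ?_
  have := hsp.card_inter_le hne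
  have := hne.card_pos
  omega

theorem Sparse.tight_union (hsp : H.Sparse) {A B : Finset E} (hA : H.Tight A) (hB : H.Tight B)
    (hAne : A.Nonempty) (hAB : 2 ≤ (H.vSpan A ∩ H.vSpan B).card) : H.Tight (A ∪ B) := by
  have hE := Finset.card_union_add_card_inter A B
  have hV := card_vSpan_union_add_card_inter H A B
  have hU := hsp (A ∪ B) (hAne.mono Finset.subset_union_left)
  have hI : ((A ∩ B).card : ℤ) ≤ 2 * (H.vSpan A ∩ H.vSpan B).card - 3 := by
    rcases (A ∩ B).eq_empty_or_nonempty with h | h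
    · rw [h, Finset.card_empty]
      omega
    · exact hsp.card_inter_le h
  unfold Tight at *
  omega

lemma Sparse.tight_union_union_of_two_le (hsp : H.Sparse) {A B C : Finset E} (hA : H.Tight A)
    (hB : H.Tight B) (hC : H.Tight C) (hAne : A.Nonempty)
    (hAB : 2 ≤ (H.vSpan A ∩ H.vSpan B).card) {p q : V} (hpq : p ≠ q)
    (hp : p ∈ H.vSpan A ∪ H.vSpan B) (hq : q ∈ H.vSpan A ∪ H.vSpan B)
    (hpC : p ∈ H.vSpan C) (hqC : q ∈ H.vSpan C) : H.Tight (A ∪ B ∪ C) := by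
  refine hsp.tight_union (hsp.tight_union hA hB hAne hAB) hC
    (hAne.mono Finset.subset_union_left) ?_
  rw [vSpan_union]
  exact Finset.one_lt_card.2
    ⟨p, Finset.mem_inter.2 ⟨hp, hpC⟩, q, Finset.mem_inter.2 ⟨hq, hqC⟩, hpq⟩

theorem Sparse.tight_union_union (hsp : H.Sparse) {A B C : Finset E} (hA : H.Tight A)
    (hB : H.Tight B) (hC : H.Tight C) (hAne : A.Nonempty) (hBne : B.Nonempty) {x y z : V}
    (hxy : x ≠ y) (hyz : y ≠ z) (hxz : x ≠ z) (hxA : x ∈ H.vSpan A) (hxC : x ∈ H.vSpan C)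
    (hyA : y ∈ H.vSpan A) (hyB : y ∈ H.vSpan B) (hzB : z ∈ H.vSpan B) (hzC : z ∈ H.vSpan C) :
    H.Tight (A ∪ B ∪ C) := by
  by_cases hAB : 2 ≤ (H.vSpan A ∩ H.vSpan B).card
  · exact hsp.tight_union_union_of_two_le hA hB hC hAne hAB hxz
      (Finset.mem_union_left _ hxA) (Finset.mem_union_right _ hzB) hxC hzC
  by_cases hBC : 2 ≤ (H.vSpan B ∩ H.vSpan C).card
  · have := hsp.tight_union_union_of_two_le hB hC hA hBne hBC hxy
      (Finset.mem_union_right _ hxC) (Finset.mem_union_left _ hyB) hxA hyA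
    rwa [show B ∪ C ∪ A = A ∪ B ∪ C by ac_rfl] at this
  by_cases hAC : 2 ≤ (H.vSpan A ∩ H.vSpan C).card
  · have := hsp.tight_union_union_of_two_le hA hC hB hAne hAC hyz
      (Finset.mem_union_left _ hyA) (Finset.mem_union_right _ hzC) hyB hzB
    rwa [show A ∪ C ∪ B = A ∪ B ∪ C by ac_rfl] at this
  -- Otherwise the three sets are pairwise edge-disjoint and meet pairwise in one vertex.
  have hE₁ := Finset.card_union_add_card_inter A B
  have hE₂ := Finset.card_union_add_card_inter (A ∪ B) C
  have hV₁ := card_vSpan_union_add_card_inter H A B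
  have hV₂ := card_vSpan_union_add_card_inter H (A ∪ B) C
  rw [hsp.inter_eq_empty hAB, Finset.card_empty] at hE₁
  rw [Finset.union_inter_distrib_right, hsp.inter_eq_empty hAC, hsp.inter_eq_empty hBC,
    Finset.union_empty, Finset.card_empty] at hE₂
  have hy : 1 ≤ (H.vSpan A ∩ H.vSpan B).card :=
    Finset.card_pos.2 ⟨y, Finset.mem_inter.2 ⟨hyA, hyB⟩⟩
  have hxz : 2 ≤ (H.vSpan (A ∪ B) ∩ H.vSpan C).card := by
    rw [vSpan_union]
    exact Finset.one_lt_card.2 ⟨x, Finset.mem_inter.2 ⟨Finset.mem_union_left _ hxA, hxC⟩,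
      z, Finset.mem_inter.2 ⟨Finset.mem_union_right _ hzB, hzC⟩, hxz⟩
  have hU := hsp (A ∪ B ∪ C) ((hAne.mono Finset.subset_union_left).mono Finset.subset_union_left)
  unfold Tight at *
  omega

end Tight

def InTightSet (H : GainGraph Γ V E) (a b : V) : Prop :=
  ∃ F : Finset E, F.Nonempty ∧ H.Tight F ∧ a ∈ H.vSpan F ∧ b ∈ H.vSpan F

theorem Sparse.addEdge {H : GainGraph Γ V E} (hsp : H.Sparse) {a b : V} (hab : a ≠ b)
    (hfree : ¬ H.InTightSet a b) (g : Γ) : (H.addEdge a b g).Sparse := by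
  intro F hF
  set F₀ := Finset.eraseNone F
  have hsub : H.vSpan F₀ ⊆ (H.addEdge a b g).vSpan F := fun x hx => by
    obtain ⟨e, he, hx⟩ := mem_vSpan.1 hx
    exact mem_vSpan_of_mem_ends (Finset.mem_eraseNone.1 he) hx
  have hs₀ := Finset.card_le_card hsub
  by_cases hn : none ∈ F
  · have hF₀ : F₀.card = F.card - 1 := Finset.card_eraseNone_of_mem hn
    have ha : a ∈ (H.addEdge a b g).vSpan F := mem_vSpan_of_mem_ends hn (Sym2.mem_mk_left a b)
    have hb : b ∈ (H.addEdge a b g).vSpan F := mem_vSpan_of_mem_ends hn (Sym2.mem_mk_right a b)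
    have hpos := hF.card_pos
    rcases F₀.eq_empty_or_nonempty with h0 | h0
    · have := Finset.one_lt_card.2 ⟨a, ha, b, hb, hab⟩
      rw [h0, Finset.card_empty] at hF₀
      omega
    have := hsp F₀ h0
    by_cases habF : a ∈ H.vSpan F₀ ∧ b ∈ H.vSpan F₀
    · have : ¬ H.Tight F₀ := fun ht => hfree ⟨F₀, h0, ht, habF⟩
      unfold Tight at this
      omega
    · have : (H.vSpan F₀).card < ((H.addEdge a b g).vSpan F).card := by
        refine Finset.card_lt_card (Finset.ssubset_iff_subset_ne.2 ⟨hsub, fun h => habF ?_⟩)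
        rw [h]
        exact ⟨ha, hb⟩
      omega
  · have hF₀ : F₀.card = F.card := Finset.card_eraseNone_of_not_mem hn
    have h0 : F₀.Nonempty := Finset.card_pos.1 (hF₀ ▸ hF.card_pos)
    have := hsp F₀ h0
    omega

theorem Sparse.not_tight_of_spans_neighbours [DecidableEq E] {H : GainGraph Γ V E}
    (hsp : H.Sparse) {v : V} {T D : Finset E} (hvT : v ∉ H.vSpan T) (hD : 3 ≤ D.card)
    (hDv : ∀ e ∈ D, v ∈ H.ends e)
    (hDT : ∀ e ∈ D, ∀ x ∈ H.ends e, x ≠ v → x ∈ H.vSpan T) : ¬ H.Tight T := by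
  intro hT
  have hdisj : Disjoint T D := Finset.disjoint_left.2 fun e heT heD =>
    hvT (mem_vSpan_of_mem_ends heT (hDv e heD))
  have hsub : H.vSpan (T ∪ D) ⊆ insert v (H.vSpan T) := fun x hx => by
    obtain ⟨e, he, hx⟩ := mem_vSpan.1 hx
    rcases Finset.mem_union.1 he with he | he
    · exact Finset.mem_insert_of_mem (mem_vSpan_of_mem_ends he hx)
    · by_cases hxv : x = v
      · exact hxv ▸ Finset.mem_insert_self _ _
      · exact Finset.mem_insert_of_mem (hDT e he x hx hxv)
  have := hsp (T ∪ D) (Finset.card_pos.1 (by omega) |>.mono Finset.subset_union_right)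
  have := (Finset.card_le_card hsub).trans (Finset.card_insert_le _ _)
  rw [Finset.card_union_of_disjoint hdisj] at *
  unfold Tight at hT
  omega

section Degree

variable [Fintype E] (H : GainGraph Γ V E)

def degree (v : V) : ℕ := Fintype.card {e // v ∈ H.ends e}

lemma card_eq_degree_add (v : V) :
    Fintype.card E = H.degree v + Fintype.card {e // v ∉ H.ends e} := by
  rw [degree, ← Fintype.card_sum, Fintype.card_congr (Equiv.sumCompl _)]

theorem sum_degree [Fintype V] (hloop : ∀ e, H.tail e ≠ H.head e) :
    ∑ v, H.degree v = 2 * Fintype.card E := by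
  have hends : ∀ e, (Finset.univ.filter (· ∈ H.ends e)).card = 2 := fun e => by
    rw [← Sym2.card_toFinset_of_not_isDiag _ (Sym2.mk_isDiag_iff.not.2 (hloop e))]
    congr 1
    ext x
    simp [Sym2.mem_toFinset, ends]
  simp only [degree, Fintype.card_subtype]
  rw [← Finset.card_univ, Finset.card_eq_sum_ones, Finset.mul_sum]
  have := Finset.sum_card_bipartiteAbove_eq_sum_card_bipartiteBelow (fun v e => v ∈ H.ends e)
    (s := Finset.univ) (t := Finset.univ)
  simp only [Finset.bipartiteAbove, Finset.bipartiteBelow, hends] at this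
  simpa using this

variable {H}

theorem Sparse.exists_degree_le_three [Fintype V] (hsp : H.Sparse)
    (hcount : (Fintype.card E : ℤ) = 2 * Fintype.card V - 3) : ∃ v, H.degree v ≤ 3 := by
  by_contra! h
  have := Finset.card_nsmul_le_sum Finset.univ H.degree 4 fun v _ => h v
  rw [H.sum_degree hsp.tail_ne_head, smul_eq_mul, Finset.card_univ] at this
  omega

end Degree

section DeleteVertex

variable [Fintype V] [Fintype E] {H : GainGraph Γ V E}

theorem Sparse.two_le_degree (hsp : H.Sparse)
    (hcount : (Fintype.card E : ℤ) = 2 * Fintype.card V - 3) (hV : 3 ≤ Fintype.card V) (v : V) :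
    2 ≤ H.degree v := by
  have hE := H.card_eq_degree_add v
  have hV' := card_subtype_ne_add_one v
  by_contra! h
  have : Nonempty {e // v ∉ H.ends e} := Fintype.card_pos_iff.1 (by omega)
  have := (hsp.deleteVertex v).card_le
  omega

theorem gainTight_deleteVertex (ht : H.GainTight 2 3 3) {v : V} (hv : H.degree v = 2) :
    (H.deleteVertex v).GainTight 2 3 3 := by
  obtain ⟨hcount, hsp⟩ := (gainTight_iff H).1 ht
  have hE := H.card_eq_degree_add v
  have hV := card_subtype_ne_add_one v
  refine (gainTight_iff _).2 ⟨?_, hsp.deleteVertex v⟩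
  omega

theorem gainTight_addEdge (ht : H.GainTight 2 3 3) {v : V} (hv : H.degree v = 3)
    {a b : {w // w ≠ v}} (hab : a ≠ b) (hfree : ¬ (H.deleteVertex v).InTightSet a b) (g : Γ) :
    ((H.deleteVertex v).addEdge a b g).GainTight 2 3 3 := by
  obtain ⟨hcount, hsp⟩ := (gainTight_iff H).1 ht
  have hE := H.card_eq_degree_add v
  have hV := card_subtype_ne_add_one v
  refine (gainTight_iff _).2 ⟨?_, (hsp.deleteVertex v).addEdge hab hfree g⟩
  rw [Fintype.card_option]
  omega

end DeleteVertex

theorem Sparse.exists_star {ι : Type*} {H : GainGraph Γ V E} (hsp : H.Sparse) {v : V}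
    (d : ι ≃ {e // v ∈ H.ends e}) :
    ∃ (t : ι → {w // w ≠ v}) (g : ι → Γ),
      Function.Injective t ∧ ∀ i, H.EdgeIs (d i).1 (t i) v (g i) := by
  choose u g hug using fun i => exists_edgeIs_of_mem_ends (d i).2
  refine ⟨fun i => ⟨u i, hsp.ne_of_edgeIs (hug i)⟩, g, fun i j hij => ?_, hug⟩
  refine d.injective (Subtype.ext (hsp.ends_injective ?_))
  rw [(hug i).ends_eq, (hug j).ends_eq, show u i = u j from congrArg Subtype.val hij]

theorem Sparse.exists_not_inTightSet [Fintype E] {H : GainGraph Γ V E}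
    (hsp : H.Sparse) {v : V} (d : Fin 3 ≃ {e // v ∈ H.ends e}) {t : Fin 3 → {w // w ≠ v}}
    {g : Fin 3 → Γ} (ht : Function.Injective t) (hd : ∀ i, H.EdgeIs (d i).1 (t i) v (g i)) :
    ∃ i, ¬ (H.deleteVertex v).InTightSet (t i) (t (i + 1)) := by
  classical
  by_contra! h
  obtain ⟨A, hAne, hA, h0A, h1A⟩ := h 0
  obtain ⟨B, hBne, hB, h1B, h2B⟩ := h 1
  obtain ⟨C, -, hC, h2C, h0C⟩ := h 2
  have hT := (hsp.deleteVertex v).tight_union_union hA hB hC hAne hBne (ht.ne (by decide))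
    (ht.ne (by decide)) (ht.ne (by decide)) h0A h0C h1A h1B h2B h2C
  have hspan : ∀ i, t i ∈ (H.deleteVertex v).vSpan (A ∪ B ∪ C) := by
    intro i
    fin_cases i
    exacts [vSpan_mono (by grind) h0A, vSpan_mono (by grind) h1B, vSpan_mono (by grind) h2C]
  have hmap : ∀ e, ((H.deleteVertex v).ends e).map (Function.Embedding.subtype _) =
      H.ends (Function.Embedding.subtype _ e) := fun _ => rfl
  rw [← tight_map_iff _ _ hmap] at hT
  refine hsp.not_tight_of_spans_neighbours (v := v) (D := Finset.univ.filter (v ∈ H.ends ·))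
    ?_ ?_ (fun e he => (Finset.mem_filter.1 he).2) ?_ hT
  · rw [vSpan_map _ _ hmap]
    simp
  · rw [← Fintype.card_subtype, Fintype.card_congr d.symm, Fintype.card_fin]
  · intro e he x hx hxv
    obtain ⟨i, rfl⟩ : ∃ i, (d i).1 = e := ⟨d.symm ⟨e, (Finset.mem_filter.1 he).2⟩, by simp⟩
    rw [(hd i).ends_eq, Sym2.mem_iff, or_iff_left hxv] at hx
    rw [vSpan_map _ _ hmap, hx]
    exact Finset.mem_map_of_mem _ (hspan i)

end GainGraph

lemma isH1a_addVertex (H : GainGraph Γ V E) (t : Fin 2 → V) (g : Fin 2 → Γ) (ht : t 0 ≠ t 1) :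
    IsH1a H (H.addVertex t g) :=
  ⟨fun _ => ⟨rfl, rfl, rfl⟩, fun _ => rfl, t 0, t 1, ht, rfl, rfl⟩

lemma isH2a_addVertex (H : GainGraph Γ V E) (e₀ : E) (t : Fin 3 → V) (g : Fin 3 → Γ)
    (ht : Function.Injective t) (h0 : H.tail e₀ = t 0) (h1 : H.head e₀ = t 1)
    (hg : g 0 * (g 1)⁻¹ = H.gain e₀) : IsH2a H e₀ (t 2) ((H.deleteEdge e₀).addVertex t g) := by
  refine ⟨h0 ▸ h1 ▸ ht.ne (by decide), h0 ▸ ht.ne (by decide), h1 ▸ ht.ne (by decide),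
    fun _ => ⟨rfl, rfl, rfl⟩, fun _ => rfl, h0 ▸ rfl, h1 ▸ rfl, hg, rfl, ?_⟩
  exact fun i j hij h => absurd (ht (Option.some_injective _ h)) hij

theorem ggIso_addVertex {Γ : Type} [Group Γ] [DecidableEq V] {H : GainGraph Γ V E} {v : V}
    {E₀ ι : Type*} (H₀ : GainGraph Γ {w // w ≠ v} E₀) (j : E₀ ≃ {e // v ∉ H.ends e})
    (hj : ∀ f, H.EdgeIs (j f).1 (H₀.tail f) (H₀.head f) (H₀.gain f))
    (d : ι ≃ {e // v ∈ H.ends e}) (t : ι → {w // w ≠ v}) (g : ι → Γ)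
    (hd : ∀ i, H.EdgeIs (d i).1 (t i) v (g i)) : GGIso (H₀.addVertex t g) H :=
  ⟨Equiv.optionSubtypeNe v,
    ((Equiv.sumComm _ _).trans (d.sumCongr j)).trans (Equiv.sumCompl _), fun e => by
      rcases e with f | i
      exacts [hj f, hd i]⟩

section Forward

variable {Γ : Type} [Group Γ] {V E : Type} [DecidableEq V] {H : GainGraph Γ V E}

theorem exists_ggIso_K2gg [Fintype V] [Fintype E] (ht : H.GainTight 2 3 3)
    (hV : Fintype.card V = 2) : ∃ g, GGIso (K2gg g) H := by
  obtain ⟨hcount, hsp⟩ := (gainTight_iff H).1 ht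
  obtain ⟨e, he⟩ := Fintype.card_eq_one_iff.1 (by omega : Fintype.card E = 1)
  have hinj : Function.Injective ![H.tail e, H.head e] := by
    simpa [Fin.cons_injective_iff] using hsp.tail_ne_head e
  exact ⟨H.gain e,
    Equiv.ofBijective _ ((Fintype.bijective_iff_injective_and_card _).2 ⟨hinj, by simp [hV]⟩),
    Equiv.ofBijective (fun _ => e) ⟨fun _ _ _ => Subsingleton.elim _ _, fun f => ⟨(), (he f).symm⟩⟩,
    fun _ => Or.inl ⟨rfl, rfl, rfl⟩⟩

theorem stepH1a_of_degree_two [Fintype E] (hsp : H.Sparse) {v : V} (hv : H.degree v = 2) :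
    StepH1a ⟨_, _, H.deleteVertex v⟩ ⟨V, E, H⟩ := by
  let d := (Fintype.equivFinOfCardEq hv).symm
  obtain ⟨t, g, ht, hd⟩ := hsp.exists_star d
  exact ⟨_, isH1a_addVertex _ t g (ht.ne zero_ne_one),
    ggIso_addVertex _ (Equiv.refl _) (fun _ => Or.inl ⟨rfl, rfl, rfl⟩) d t g hd⟩

theorem stepH2a_of_star {v : V} (d : Fin 3 ≃ {e // v ∈ H.ends e}) {t : Fin 3 → {w // w ≠ v}}
    {g : Fin 3 → Γ} (ht : Function.Injective t) (hd : ∀ i, H.EdgeIs (d i).1 (t i) v (g i)) :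
    StepH2a ⟨_, _, (H.deleteVertex v).addEdge (t 0) (t 1) (g 0 * (g 1)⁻¹)⟩ ⟨V, E, H⟩ := by
  let j : {f : Option {e // v ∉ H.ends e} // f ≠ none} ≃ {e // v ∉ H.ends e} :=
    (Equiv.subtypeEquivRight fun _ => Option.ne_none_iff_isSome).trans (Equiv.optionIsSomeEquiv _)
  refine ⟨none, t 2, _, isH2a_addVertex _ none t g ht rfl rfl rfl, ggIso_addVertex _ j ?_ d t g hd⟩
  rintro ⟨_ | e, hf⟩
  · exact absurd rfl hf
  · exact Or.inl ⟨rfl, rfl, rfl⟩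

theorem exists_stepH2a_of_degree_three [Fintype V] [Fintype E] (ht : H.GainTight 2 3 3) {v : V}
    (hv : H.degree v = 3) :
    ∃ (a b : {w // w ≠ v}) (g : Γ), ((H.deleteVertex v).addEdge a b g).GainTight 2 3 3 ∧
      StepH2a ⟨_, _, (H.deleteVertex v).addEdge a b g⟩ ⟨V, E, H⟩ := by
  have hsp := ((gainTight_iff H).1 ht).2
  let d₀ := (Fintype.equivFinOfCardEq hv).symm
  obtain ⟨t₀, g₀, ht₀, hd₀⟩ := hsp.exists_star d₀
  obtain ⟨i, hi⟩ := hsp.exists_not_inTightSet d₀ ht₀ hd₀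
  -- rotate the neighbours so that the pair `t₀ i`, `t₀ (i + 1)` comes first
  have hti : Function.Injective fun j => t₀ (j + i) := ht₀.comp (add_left_injective i)
  refine ⟨_, _, _, gainTight_addEdge ht hv (hti.ne (by decide)) ?_ _,
    stepH2a_of_star ((Equiv.addRight i).trans d₀) hti fun j => hd₀ (j + i)⟩
  rwa [zero_add, add_comm]

theorem constructible_of_gainTight (n : ℕ) :
    ∀ {V E : Type} [Fintype V] [Fintype E] [DecidableEq V] (H : GainGraph Γ V E),
      Fintype.card V = n → H.GainTight 2 3 3 → H1aH2aConstructible ⟨V, E, H⟩ := by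
  induction n using Nat.strong_induction_on with
  | _ n ih =>
  intro V E _ _ _ H hn ht
  obtain ⟨hcount, hsp⟩ := (gainTight_iff H).1 ht
  rcases (show 2 ≤ Fintype.card V by omega).eq_or_lt with hV | hV
  · exact .base_mem (exists_ggIso_K2gg ht hV.symm)
  obtain ⟨v, hv⟩ := hsp.exists_degree_le_three hcount
  have hlt : Fintype.card {w // w ≠ v} < n := by
    have := card_subtype_ne_add_one v
    omega
  rcases (hsp.two_le_degree hcount hV v).eq_or_lt with hv2 | hv3
  · exact .step_mem (ih _ hlt _ rfl (gainTight_deleteVertex ht hv2.symm))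
      (.inl (stepH1a_of_degree_two hsp hv2.symm))
  · obtain ⟨a, b, g, hT, hstep⟩ := exists_stepH2a_of_degree_three ht (by omega : H.degree v = 3)
    exact .step_mem (ih _ hlt _ rfl hT) (.inr hstep)

end Forward

theorem statement9_general
    {Γ : Type} [Group Γ] {V E : Type}
    [Fintype V] [Fintype E] [DecidableEq V]
    (H : GainGraph Γ V E) :
    H.GainTight 2 3 3 ↔
      Constructed (fun X => ∃ g : Γ, GGIso (K2gg g) X.gg)
        (fun X Y => StepH1a X Y ∨ StepH2a X Y)
        (fun _ _ _ => False) ⟨V, E, H⟩ :=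
  ⟨constructible_of_gainTight _ H rfl, fun hC => gainTight_of_constructible hC⟩

/-- Theorem `thm:233construction`: a quotient gain graph is
`(2,3,3)`-gain-tight if and only if it can be constructed sequentially from `K₂` by
H1a and H2a operations. -/
theorem statement9
    {Γ : Type} [Group Γ] {W V E : Type}
    [Fintype V] [Fintype E] [DecidableEq V] [DecidableEq E]
    (G : SimpleGraph W) (θ : Γ →* Equiv.Perm W) (hfree : FreeGraphAction G θ)
    (H : GainGraph Γ V E) (hquot : IsQuotientOf G θ H) :
    H.GainTight 2 3 3 ↔
      Constructed (fun X => ∃ g : Γ, GGIso (K2gg g) X.gg)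
        (fun X Y => StepH1a X Y ∨ StepH2a X Y)
        (fun _ _ _ => False) ⟨V, E, H⟩ :=
  statement9_general H

end SymSurf
end
end
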